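/- arXiv:2510.08251 — 12 statements merged into one kernel-verified Lean document; each statement's English description precedes it below -/
import Mathlib

section
/- If an outcome α of the verifiable disclosure game is induced by a perfect Bayesian equilibrium, then for every state θ the sender's interim expected payoff v_α(θ) = Σ_j v(j)·α(j|θ) is at least his complete-information payoff underline{v}(θ) = min { v(j) : j ∈ J, u(j,θ) ≥ u(j',θ) for all j' ∈ J }. -/
open Finset

section Disclosure

variable {Θ J : Type} [Fintype Θ] [DecidableEq Θ] [Fintype J] [DecidableEq J]

/-- A perfect Bayesian equilibrium of the verifiable disclosure game:
messages are nonempty subsets of the (finite) state space, and the message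
sent in state `θ` must contain `θ`. -/
structure PBE (μ0 : Θ → ℝ) (u : J → Θ → ℝ) (v : J → ℝ) where
  σ : Θ → Finset Θ → ℝ
  τ : Finset Θ → J → ℝ
  q : Finset Θ → Θ → ℝ
  σ_nonneg : ∀ θ m, 0 ≤ σ θ m
  σ_sum : ∀ θ, ∑ m, σ θ m = 1
  σ_verif : ∀ θ m, 0 < σ θ m → θ ∈ m
  τ_nonneg : ∀ m j, 0 ≤ τ m j
  τ_sum : ∀ m : Finset Θ, m.Nonempty → ∑ j, τ m j = 1
  q_nonneg : ∀ m θ, 0 ≤ q m θ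
  q_sum : ∀ m : Finset Θ, m.Nonempty → ∑ θ, q m θ = 1
  q_supp : ∀ m θ, 0 < q m θ → θ ∈ m
  sender_opt : ∀ θ m, 0 < σ θ m → ∀ m' : Finset Θ, θ ∈ m' →
    ∑ j, v j * τ m' j ≤ ∑ j, v j * τ m j
  receiver_opt : ∀ m : Finset Θ, m.Nonempty → ∀ j, 0 < τ m j → ∀ j',
    ∑ θ, u j' θ * q m θ ≤ ∑ θ, u j θ * q m θ
  bayes : ∀ m : Finset Θ, 0 < ∑ θ, μ0 θ * σ θ m → ∀ θ,
    q m θ * (∑ θ', μ0 θ' * σ θ' m) = μ0 θ * σ θ m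

/-- The equilibrium `E` induces the outcome `α`. -/
def Induces {μ0 : Θ → ℝ} {u : J → Θ → ℝ} {v : J → ℝ}
    (E : PBE μ0 u v) (α : Θ → J → ℝ) : Prop :=
  ∀ θ j, α θ j = ∑ m, E.σ θ m * E.τ m j

/-- `α` is a well-defined outcome: a state-dependent distribution over actions. -/
def IsOutcome (α : Θ → J → ℝ) : Prop :=
  (∀ θ j, 0 ≤ α θ j) ∧ ∀ θ, ∑ j, α θ j = 1

/-- The sender's lowest complete-information payoff at state `θ`:
the minimum of `v j` over the receiver's best responses at `θ`. -/
noncomputable def underlineV (u : J → Θ → ℝ) (v : J → ℝ) (θ : Θ) : ℝ :=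
  sInf (v '' {j | ∀ j', u j' θ ≤ u j θ})

/-- The sender's interim expected payoff at `θ` under outcome `α`. -/
def interimV (v : J → ℝ) (α : Θ → J → ℝ) (θ : Θ) : ℝ :=
  ∑ j, v j * α θ j

/-- The sender's ex-ante expected payoff under outcome `α`. -/
def exanteV (μ0 : Θ → ℝ) (v : J → ℝ) (α : Θ → J → ℝ) : ℝ :=
  ∑ θ, (∑ j, v j * α θ j) * μ0 θ

/-- Incentive compatibility: in every state the sender gets at least his
complete-information payoff. -/
def IC (u : J → Θ → ℝ) (v : J → ℝ) (α : Θ → J → ℝ) : Prop :=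
  ∀ θ, underlineV u v θ ≤ interimV v α θ

/-- Obedience of the outcome `α`. -/
def Obedient (μ0 : Θ → ℝ) (u : J → Θ → ℝ) (α : Θ → J → ℝ) : Prop :=
  ∀ j j', 0 ≤ ∑ θ, (u j θ - u j' θ) * α θ j * μ0 θ

/-- `α` is deterministic: in every state the receiver takes some action w.p. 1. -/
def Deterministic (α : Θ → J → ℝ) : Prop :=
  ∀ θ, ∃ j, α θ j = 1

end Disclosure

/-- every equilibrium outcome is incentive-compatible. -/
theorem equilibrium_outcome_is_IC
    {Θ J : Type} [Fintype Θ] [DecidableEq Θ] [Fintype J] [DecidableEq J]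
    [Nonempty J] [LinearOrder J]
    (μ0 : Θ → ℝ) (u : J → Θ → ℝ) (v : J → ℝ)
    (hμ_pos : ∀ θ, 0 < μ0 θ) (hμ_sum : ∑ θ, μ0 θ = 1)
    (hv : StrictMono v)
    (E : PBE μ0 u v) (α : Θ → J → ℝ) (hα : Induces E α) :
    ∀ θ, underlineV u v θ ≤ ∑ j, v j * α θ j := by
  intro θ
  set m0 : Finset Θ := {θ} with hm0def
  have hm0 : m0.Nonempty := ⟨θ, Finset.mem_singleton_self θ⟩
  have hq0 : ∀ θ', θ' ≠ θ → E.q m0 θ' = 0 := by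
    intro θ' hne
    by_contra h
    have hpos : 0 < E.q m0 θ' := lt_of_le_of_ne (E.q_nonneg m0 θ') (Ne.symm h)
    have := E.q_supp m0 θ' hpos
    rw [hm0def, Finset.mem_singleton] at this
    exact hne this
  have hq1 : E.q m0 θ = 1 := by
    have hs := E.q_sum m0 hm0
    rw [Finset.sum_eq_single θ (fun b _ hb => hq0 b hb)
      (fun h => absurd (Finset.mem_univ θ) h)] at hs
    exact hs
  have hBR : ∀ j, 0 < E.τ m0 j → ∀ j', u j' θ ≤ u j θ := by
    intro j hj j'
    have h := E.receiver_opt m0 hm0 j hj j'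
    have hsum : ∀ k : J, ∑ θ'', u k θ'' * E.q m0 θ'' = u k θ := by
      intro k
      rw [Finset.sum_eq_single θ (fun b _ hb => by rw [hq0 b hb]; ring)
        (fun h => absurd (Finset.mem_univ θ) h), hq1, mul_one]
    rw [hsum, hsum] at h
    exact h
  have hbdd : BddBelow (v '' {j | ∀ j', u j' θ ≤ u j θ}) := (Set.toFinite _).bddBelow
  have hle : ∀ j, 0 < E.τ m0 j → underlineV u v θ ≤ v j := fun j hj =>
    csInf_le hbdd ⟨j, hBR j hj, rfl⟩
  have hc : underlineV u v θ ≤ ∑ j, v j * E.τ m0 j := by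
    have hτs := E.τ_sum m0 hm0
    calc underlineV u v θ = ∑ j, underlineV u v θ * E.τ m0 j := by
          rw [← Finset.mul_sum, hτs, mul_one]
      _ ≤ ∑ j, v j * E.τ m0 j := by
          apply Finset.sum_le_sum
          intro j _
          rcases eq_or_lt_of_le (E.τ_nonneg m0 j) with h | h
          · rw [← h, mul_zero, mul_zero]
          · exact mul_le_mul_of_nonneg_right (hle j h) (le_of_lt h)
  have hrw : ∑ j, v j * α θ j = ∑ m, E.σ θ m * ∑ j, v j * E.τ m j := by
    simp only [hα θ, Finset.mul_sum]
    rw [Finset.sum_comm]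
    apply Finset.sum_congr rfl
    intro m _
    apply Finset.sum_congr rfl
    intro j _
    ring
  rw [hrw]
  calc underlineV u v θ = ∑ m, E.σ θ m * underlineV u v θ := by
        rw [← Finset.sum_mul, E.σ_sum θ, one_mul]
    _ ≤ ∑ m, E.σ θ m * ∑ j, v j * E.τ m j := by
        apply Finset.sum_le_sum
        intro m _
        rcases eq_or_lt_of_le (E.σ_nonneg θ m) with h | h
        · rw [← h, zero_mul, zero_mul]
        · refine mul_le_mul_of_nonneg_left ?_ (le_of_lt h)
          exact le_trans hc (E.sender_opt θ m h m0 (Finset.mem_singleton_self θ))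
end

section
/- Every outcome α induced by a perfect Bayesian equilibrium of the finite verifiable disclosure game is obedient: for every action j ∈ J and every j' ∈ J, Σ_θ (u(j,θ) − u(j',θ))·α(j|θ)·μ₀(θ) ≥ 0. -/
open Finset

/-- every equilibrium outcome is obedient. -/
theorem equilibrium_outcome_is_obedient
    {Θ J : Type} [Fintype Θ] [DecidableEq Θ] [Fintype J] [DecidableEq J]
    [Nonempty J] [LinearOrder J]
    (μ0 : Θ → ℝ) (u : J → Θ → ℝ) (v : J → ℝ)
    (hμ_pos : ∀ θ, 0 < μ0 θ) (hμ_sum : ∑ θ, μ0 θ = 1)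
    (hv : StrictMono v)
    (E : PBE μ0 u v) (α : Θ → J → ℝ) (hα : Induces E α) :
    ∀ j j', 0 ≤ ∑ θ, (u j θ - u j' θ) * α θ j * μ0 θ := by
  intro j j'
  have key : ∀ m : Finset Θ,
      0 ≤ ∑ θ, (u j θ - u j' θ) * (E.σ θ m * E.τ m j) * μ0 θ := by
    intro m
    rcases eq_or_lt_of_le (E.τ_nonneg m j) with h0 | hτ
    · simp [← h0]
    · obtain ⟨S, hS⟩ : ∃ S : ℝ, S = ∑ θ', μ0 θ' * E.σ θ' m := ⟨_, rfl⟩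
      have hnn : ∀ θ ∈ Finset.univ, (0:ℝ) ≤ μ0 θ * E.σ θ m := fun θ _ =>
        mul_nonneg (hμ_pos θ).le (E.σ_nonneg θ m)
      have hSnn : 0 ≤ S := hS ▸ Finset.sum_nonneg hnn
      rcases eq_or_lt_of_le hSnn with hS0 | hSpos
      · have hz := (Finset.sum_eq_zero_iff_of_nonneg hnn).mp (hS ▸ hS0.symm : _)
        apply le_of_eq
        symm
        apply Finset.sum_eq_zero
        intro θ _
        have hσ : E.σ θ m = 0 := by
          rcases mul_eq_zero.mp (hz θ (Finset.mem_univ θ)) with h | h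
          · exact absurd h (ne_of_gt (hμ_pos θ))
          · exact h
        simp [hσ]
      · have hne : m.Nonempty := by
          by_contra h
          have hall : ∀ θ, E.σ θ m = 0 := fun θ => by
            by_contra hσ
            exact h ⟨θ, E.σ_verif θ m
              (lt_of_le_of_ne (E.σ_nonneg θ m) (Ne.symm hσ))⟩
          simp [hS, hall] at hSpos
        have hrec := E.receiver_opt m hne j hτ j'
        have heq : ∑ θ, (u j θ - u j' θ) * (E.σ θ m * E.τ m j) * μ0 θ
            = E.τ m j * S * ((∑ θ, u j θ * E.q m θ) - ∑ θ, u j' θ * E.q m θ) := by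
          rw [mul_sub, Finset.mul_sum, Finset.mul_sum, ← Finset.sum_sub_distrib]
          apply Finset.sum_congr rfl
          intro θ _
          have hb := E.bayes m (hS ▸ hSpos) θ
          rw [← hS] at hb
          linear_combination -(E.τ m j * (u j θ - u j' θ)) * hb
        rw [heq]
        exact mul_nonneg (mul_nonneg hτ.le hSnn) (sub_nonneg.mpr hrec)
  have hswap : ∑ θ, (u j θ - u j' θ) * α θ j * μ0 θ
      = ∑ m, ∑ θ, (u j θ - u j' θ) * (E.σ θ m * E.τ m j) * μ0 θ := by
    rw [Finset.sum_comm]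
    apply Finset.sum_congr rfl
    intro θ _
    rw [hα θ j, Finset.mul_sum, Finset.sum_mul]
  rw [hswap]
  exact Finset.sum_nonneg fun m _ => key m
end

section
/- Let α be a deterministic outcome of the finite verifiable disclosure game, with outcome partition {W_j}_{j∈J} where W_j = {θ : α(j|θ)=1}. If α is incentive-compatible (for all θ ∈ W_j, v(j) ≥ underline{v}(θ)) and obedient (for all j, j', Σ_{θ ∈ W_j} (u(j,θ) − u(j',θ))·μ₀(θ) ≥ 0), then α is an equilibrium outcome: there exists a perfect Bayesian equilibrium (σ, τ, q) inducing α, in which the sender in state θ ∈ W_j sends the message W_j with probability one. -/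
open Finset

section AuxProof

open Classical

variable {Θ J : Type} [Fintype Θ] [DecidableEq Θ] [Fintype J] [DecidableEq J]

/-- The set of receiver best responses at state `θ`. -/
noncomputable def brSet (u : J → Θ → ℝ) (θ : Θ) : Finset J :=
  Finset.univ.filter (fun j => ∀ j', u j' θ ≤ u j θ)

lemma brSet_nonempty [Nonempty J] (u : J → Θ → ℝ) (θ : Θ) : (brSet u θ).Nonempty := by
  obtain ⟨j, -, hj⟩ := Finset.exists_max_image Finset.univ (fun j => u j θ) Finset.univ_nonempty
  exact ⟨j, by simpa [brSet] using fun j' => hj j' (Finset.mem_univ _)⟩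

/-- The lowest best response at `θ`. -/
noncomputable def br [Nonempty J] [LinearOrder J] (u : J → Θ → ℝ) (θ : Θ) : J :=
  (brSet u θ).min' (brSet_nonempty u θ)

lemma br_opt [Nonempty J] [LinearOrder J] (u : J → Θ → ℝ) (θ : Θ) (j' : J) :
    u j' θ ≤ u (br u θ) θ := by
  have h := (brSet u θ).min'_mem (brSet_nonempty u θ)
  simp only [brSet, Finset.mem_filter] at h
  exact h.2 j'

lemma underlineV_eq_br [Nonempty J] [LinearOrder J] {v : J → ℝ} (hv : StrictMono v)
    (u : J → Θ → ℝ) (θ : Θ) : underlineV u v θ = v (br u θ) := by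
  have hL : IsLeast (v '' {j | ∀ j', u j' θ ≤ u j θ}) (v (br u θ)) := by
    constructor
    · exact ⟨br u θ, fun j' => br_opt u θ j', rfl⟩
    · rintro x ⟨j, hj, rfl⟩
      exact hv.monotone (Finset.min'_le _ j (by simpa [brSet] using hj))
  exact hL.csInf_eq

end AuxProof

/-- a deterministic, IC, and obedient outcome is an equilibrium
outcome, implemented by an equilibrium in which state `θ ∈ W j` sends `W j`. -/
theorem deterministic_IC_obedient_is_equilibrium_outcome
    {Θ J : Type} [Fintype Θ] [DecidableEq Θ] [Fintype J] [DecidableEq J]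
    [Nonempty J] [LinearOrder J]
    (μ0 : Θ → ℝ) (u : J → Θ → ℝ) (v : J → ℝ)
    (hμ_pos : ∀ θ, 0 < μ0 θ) (hμ_sum : ∑ θ, μ0 θ = 1)
    (hv : StrictMono v)
    (α : Θ → J → ℝ) (hout : IsOutcome α) (hdet : Deterministic α)
    (hIC : ∀ j, ∀ θ ∈ Finset.univ.filter (fun θ => α θ j = 1),
      underlineV u v θ ≤ v j)
    (hobed : ∀ j j', 0 ≤ ∑ θ ∈ Finset.univ.filter (fun θ => α θ j = 1),
      (u j θ - u j' θ) * μ0 θ) :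
    ∃ E : PBE μ0 u v, Induces E α ∧
      ∀ θ j, α θ j = 1 →
        E.σ θ (Finset.univ.filter (fun θ' => α θ' j = 1)) = 1 := by
  classical
  obtain ⟨hαnn, hαsum⟩ := hout
  -- the action taken with probability one at each state
  set act : Θ → J := fun θ => Classical.choose (hdet θ) with hactdef
  have hact : ∀ θ, α θ (act θ) = 1 := fun θ => Classical.choose_spec (hdet θ)
  have hzero : ∀ θ j, j ≠ act θ → α θ j = 0 := by
    intro θ j hj
    have h1 : ∑ k ∈ Finset.univ.erase (act θ), α θ k = 0 := by
      have h2 := hαsum θ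
      rw [← Finset.add_sum_erase _ _ (Finset.mem_univ (act θ)), hact θ] at h2
      linarith
    exact (Finset.sum_eq_zero_iff_of_nonneg (fun k _ => hαnn θ k)).1 h1 j (by simp [hj])
  set W : J → Finset Θ := fun j => Finset.univ.filter (fun θ => α θ j = 1) with hWdef
  have hWmem : ∀ θ, θ ∈ W (act θ) := fun θ => by
    rw [hWdef]; exact Finset.mem_filter.2 ⟨Finset.mem_univ θ, hact θ⟩
  have hWuniq : ∀ θ j, θ ∈ W j → j = act θ := by
    intro θ j h
    by_contra hne
    have h0 := hzero θ j hne
    rw [hWdef] at h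
    have h1 : α θ j = 1 := (Finset.mem_filter.1 h).2
    rw [h0] at h1; norm_num at h1
  set On : Finset Θ → Prop := fun m => ∃ θ0, m = W (act θ0) with hOndef
  set θh : ∀ m : Finset Θ, m.Nonempty → Θ :=
    fun m hm => Classical.choose (Finset.exists_min_image m (underlineV u v) hm) with hθhdef
  have θh_spec : ∀ (m : Finset Θ) (hm : m.Nonempty),
      θh m hm ∈ m ∧ ∀ θ ∈ m, underlineV u v (θh m hm) ≤ underlineV u v θ := by
    intro m hm
    exact Classical.choose_spec (Finset.exists_min_image m (underlineV u v) hm)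
  have hMpos : ∀ m, On m → 0 < ∑ θ' ∈ m, μ0 θ' := by
    rintro m ⟨θ0, rfl⟩
    exact Finset.sum_pos (fun i _ => hμ_pos i) ⟨θ0, hWmem θ0⟩
  have hchoose : ∀ (m : Finset Θ) (h : On m) (θ : Θ), θ ∈ m →
      act (Classical.choose h) = act θ := by
    intro m h θ hθ
    have hs := Classical.choose_spec h
    rw [hs] at hθ
    exact hWuniq θ _ hθ
  -- the strategies and beliefs
  set σf : Θ → Finset Θ → ℝ := fun θ m => if m = W (act θ) then 1 else 0 with hσf
  set τf : Finset Θ → J → ℝ := fun m j =>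
    if h : On m then (if j = act (Classical.choose h) then 1 else 0)
    else if hm : m.Nonempty then (if j = br u (θh m hm) then 1 else 0) else 0 with hτf
  set qf : Finset Θ → Θ → ℝ := fun m θ =>
    if h : On m then (if θ ∈ m then μ0 θ / (∑ θ' ∈ m, μ0 θ') else 0)
    else if hm : m.Nonempty then (if θ = θh m hm then 1 else 0) else 0 with hqf
  have hτ_on : ∀ (m : Finset Θ) (h : On m),
      ∑ j, v j * τf m j = v (act (Classical.choose h)) := by
    intro m h
    simp only [hτf, dif_pos h, mul_ite, mul_one, mul_zero]
    simp [Finset.sum_ite_eq']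
  have hτ_off : ∀ (m : Finset Θ) (h : ¬ On m) (hm : m.Nonempty),
      ∑ j, v j * τf m j = v (br u (θh m hm)) := by
    intro m h hm
    simp only [hτf, dif_neg h, dif_pos hm, mul_ite, mul_one, mul_zero]
    simp [Finset.sum_ite_eq']
  refine ⟨{
    σ := σf, τ := τf, q := qf
    σ_nonneg := ?_, σ_sum := ?_, σ_verif := ?_, τ_nonneg := ?_, τ_sum := ?_
    q_nonneg := ?_, q_sum := ?_, q_supp := ?_, sender_opt := ?_
    receiver_opt := ?_, bayes := ?_ }, ?_, ?_⟩
  · -- σ_nonneg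
    intro θ m
    simp only [hσf]
    split_ifs <;> norm_num
  · -- σ_sum
    intro θ
    simp only [hσf]
    rw [Finset.sum_ite_eq' Finset.univ (W (act θ)) (fun _ => (1 : ℝ))]
    simp
  · -- σ_verif
    intro θ m h
    simp only [hσf] at h
    by_cases hc : m = W (act θ)
    · rw [hc]; exact hWmem θ
    · rw [if_neg hc] at h; norm_num at h
  · -- τ_nonneg
    intro m j
    simp only [hτf]
    split_ifs <;> norm_num
  · -- τ_sum
    intro m hm
    by_cases h : On m
    · simp only [hτf, dif_pos h]
      rw [Finset.sum_ite_eq' Finset.univ (act (Classical.choose h)) (fun _ => (1 : ℝ))]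
      simp
    · simp only [hτf, dif_neg h, dif_pos hm]
      rw [Finset.sum_ite_eq' Finset.univ (br u (θh m hm)) (fun _ => (1 : ℝ))]
      simp
  · -- q_nonneg
    intro m θ
    simp only [hqf]
    split_ifs with h1 h2 h3 h4
    · exact div_nonneg (hμ_pos θ).le (Finset.sum_nonneg fun i _ => (hμ_pos i).le)
    all_goals norm_num
  · -- q_sum
    intro m hm
    by_cases h : On m
    · simp only [hqf, dif_pos h]
      rw [Finset.sum_ite_mem, Finset.univ_inter, ← Finset.sum_div,
        div_self (hMpos m h).ne']
    · simp only [hqf, dif_neg h, dif_pos hm]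
      rw [Finset.sum_ite_eq' Finset.univ (θh m hm) (fun _ => (1 : ℝ))]
      simp
  · -- q_supp
    intro m θ hq
    simp only [hqf] at hq
    by_cases h : On m
    · rw [dif_pos h] at hq
      by_cases hmem : θ ∈ m
      · exact hmem
      · rw [if_neg hmem] at hq; norm_num at hq
    · rw [dif_neg h] at hq
      by_cases hm : m.Nonempty
      · rw [dif_pos hm] at hq
        by_cases he : θ = θh m hm
        · rw [he]; exact (θh_spec m hm).1
        · rw [if_neg he] at hq; norm_num at hq
      · rw [dif_neg hm] at hq; norm_num at hq
  · -- sender_opt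
    intro θ m hσ m' hθ'
    have hm_eq : m = W (act θ) := by
      by_contra hc
      simp only [hσf] at hσ
      rw [if_neg hc] at hσ; norm_num at hσ
    subst hm_eq
    have hOnm : On (W (act θ)) := ⟨θ, rfl⟩
    have hR := hτ_on (W (act θ)) hOnm
    rw [hchoose _ hOnm θ (hWmem θ)] at hR
    rw [hR]
    by_cases h' : On m'
    · rw [hτ_on m' h', hchoose m' h' θ hθ']
    · have hm' : m'.Nonempty := ⟨θ, hθ'⟩
      rw [hτ_off m' h' hm']
      calc v (br u (θh m' hm')) = underlineV u v (θh m' hm') :=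
            (underlineV_eq_br hv u _).symm
        _ ≤ underlineV u v θ := (θh_spec m' hm').2 θ hθ'
        _ ≤ v (act θ) := hIC (act θ) θ
            (Finset.mem_filter.2 ⟨Finset.mem_univ θ, hact θ⟩)
  · -- receiver_opt
    intro m hm j hτ j'
    by_cases h : On m
    · have hj : j = act (Classical.choose h) := by
        simp only [hτf, dif_pos h] at hτ
        by_contra hc
        rw [if_neg hc] at hτ; norm_num at hτ
      have hms := Classical.choose_spec h
      have hMp : 0 < ∑ θ' ∈ m, μ0 θ' := hMpos m h
      have hq_eval : ∀ f : Θ → ℝ,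
          ∑ θ, f θ * qf m θ = (∑ θ ∈ m, f θ * μ0 θ) / (∑ θ' ∈ m, μ0 θ') := by
        intro f
        simp only [hqf, dif_pos h, mul_ite, mul_zero, ← mul_div_assoc]
        rw [Finset.sum_ite_mem, Finset.univ_inter, ← Finset.sum_div]
      rw [hq_eval (u j'), hq_eval (u j)]
      have hfil : (Finset.univ.filter fun θ => α θ j = 1) = m := by
        rw [hms, hj]
      have hdiff := hobed j j'
      rw [hfil] at hdiff
      have hle : ∑ θ ∈ m, u j' θ * μ0 θ ≤ ∑ θ ∈ m, u j θ * μ0 θ := by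
        have h2 : ∑ θ ∈ m, (u j θ * μ0 θ - u j' θ * μ0 θ)
            = ∑ θ ∈ m, (u j θ - u j' θ) * μ0 θ :=
          Finset.sum_congr rfl (fun θ _ => by ring)
        rw [← h2, Finset.sum_sub_distrib] at hdiff
        linarith
      exact div_le_div_of_nonneg_right hle hMp.le
    · have hj : j = br u (θh m hm) := by
        simp only [hτf, dif_neg h, dif_pos hm] at hτ
        by_contra hc
        rw [if_neg hc] at hτ; norm_num at hτ
      have hq_eval : ∀ f : Θ → ℝ, ∑ θ, f θ * qf m θ = f (θh m hm) := by
        intro f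
        simp only [hqf, dif_neg h, dif_pos hm, mul_ite, mul_one, mul_zero]
        simp [Finset.sum_ite_eq']
      rw [hq_eval (u j'), hq_eval (u j), hj]
      exact br_opt u _ j'
  · -- bayes
    intro m hpos θ
    have hOn : On m := by
      by_contra h
      have hz : ∑ θ', μ0 θ' * σf θ' m = 0 := by
        apply Finset.sum_eq_zero
        intro θ' _
        have hσ0 : σf θ' m = 0 := by
          simp only [hσf]
          rw [if_neg]
          intro hc; exact h ⟨θ', hc⟩
        rw [hσ0, mul_zero]
      rw [hz] at hpos; norm_num at hpos
    have hσ_mem : ∀ θ' : Θ, σf θ' m = if θ' ∈ m then 1 else 0 := by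
      intro θ'
      obtain ⟨θ0, hm0⟩ := hOn
      simp only [hσf]
      by_cases hmem : θ' ∈ m
      · rw [if_pos hmem, if_pos]
        have hc : act θ0 = act θ' := hWuniq θ' (act θ0) (hm0 ▸ hmem)
        rw [hm0, hc]
      · rw [if_neg hmem, if_neg]
        intro hc; exact hmem (hc ▸ hWmem θ')
    have hmass : ∑ θ', μ0 θ' * σf θ' m = ∑ θ' ∈ m, μ0 θ' := by
      calc ∑ θ', μ0 θ' * σf θ' m = ∑ θ', if θ' ∈ m then μ0 θ' else 0 :=
            Finset.sum_congr rfl (fun θ' _ => by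
              rw [hσ_mem θ']; split_ifs <;> ring)
        _ = ∑ θ' ∈ m, μ0 θ' := by rw [Finset.sum_ite_mem, Finset.univ_inter]
    rw [hmass, hσ_mem θ]
    simp only [hqf, dif_pos hOn]
    by_cases hmem : θ ∈ m
    · rw [if_pos hmem, if_pos hmem, mul_one,
        div_mul_cancel₀ _ (hMpos m hOn).ne']
    · rw [if_neg hmem, if_neg hmem, zero_mul, mul_zero]
  · -- Induces
    intro θ j
    have h1 : ∑ m, σf θ m * τf m j = τf (W (act θ)) j := by
      simp only [hσf, ite_mul, one_mul, zero_mul]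
      rw [Finset.sum_ite_eq' Finset.univ (W (act θ)) (fun m => τf m j)]
      simp
    rw [h1]
    have hOn : On (W (act θ)) := ⟨θ, rfl⟩
    simp only [hτf, dif_pos hOn]
    rw [hchoose _ hOn θ (hWmem θ)]
    by_cases hje : j = act θ
    · rw [if_pos hje, hje, hact θ]
    · rw [if_neg hje]
      exact hzero θ j hje
  · -- sends W j with probability one
    intro θ j hj1
    have hθW : θ ∈ W j := by
      rw [hWdef]; exact Finset.mem_filter.2 ⟨Finset.mem_univ θ, hj1⟩
    have hje : j = act θ := hWuniq θ j hθW
    simp only [hσf]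
    rw [if_pos]
    rw [← hje, hWdef]
end

section
/- If a commitment outcome ψ̄ (an obedient outcome maximizing the sender's ex-ante payoff V_ψ = Σ_θ Σ_j v(j)ψ(j|θ)μ₀(θ) over all obedient outcomes) is deterministic and incentive-compatible, then ψ̄ is an equilibrium outcome of the finite verifiable disclosure game. -/
open Finset

/-- Auxiliary: there is a best response attaining `underlineV`. -/
lemma exists_minBR {Θ J : Type} [Fintype J] [Nonempty J]
    (u : J → Θ → ℝ) (v : J → ℝ) (θ : Θ) :
    ∃ j, (∀ j', u j' θ ≤ u j θ) ∧ v j = underlineV u v θ := by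
  have hne : {j | ∀ j', u j' θ ≤ u j θ}.Nonempty := by
    obtain ⟨j, -, hj⟩ := Finset.exists_max_image Finset.univ (fun j => u j θ)
      Finset.univ_nonempty
    exact ⟨j, fun j' => hj j' (Finset.mem_univ _)⟩
  have hmem := (hne.image v).csInf_mem (Set.toFinite _)
  obtain ⟨j, hj, hvj⟩ := hmem
  exact ⟨j, hj, hvj⟩

/-- a deterministic and IC commitment outcome is an equilibrium
outcome of the finite verifiable disclosure game. -/
theorem deterministic_IC_commitment_is_equilibrium_outcome
    {Θ J : Type} [Fintype Θ] [DecidableEq Θ] [Fintype J] [DecidableEq J]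
    [Nonempty J] [LinearOrder J]
    (μ0 : Θ → ℝ) (u : J → Θ → ℝ) (v : J → ℝ)
    (hμ_pos : ∀ θ, 0 < μ0 θ) (hμ_sum : ∑ θ, μ0 θ = 1)
    (hv : StrictMono v)
    (ψ : Θ → J → ℝ) (hout : IsOutcome ψ) (hobed : Obedient μ0 u ψ)
    (hmax : ∀ ψ' : Θ → J → ℝ, IsOutcome ψ' → Obedient μ0 u ψ' →
      exanteV μ0 v ψ' ≤ exanteV μ0 v ψ)
    (hdet : Deterministic ψ) (hIC : IC u v ψ) :
    ∃ E : PBE μ0 u v, Induces E ψ := by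
  classical
  have hΘ : Nonempty Θ := by
    by_contra h
    rw [not_nonempty_iff] at h
    simp at hμ_sum
  choose a ha using hdet
  have hψ0 : ∀ θ j, j ≠ a θ → ψ θ j = 0 := by
    intro θ j hj
    have h1 := hout.2 θ
    rw [← Finset.sum_erase_add _ _ (Finset.mem_univ (a θ)), ha θ] at h1
    have h2 : ∑ j' ∈ Finset.univ.erase (a θ), ψ θ j' = 0 := by linarith
    have h3 := (Finset.sum_eq_zero_iff_of_nonneg (fun j' _ => hout.1 θ j')).mp h2
    exact h3 j (Finset.mem_erase.mpr ⟨hj, Finset.mem_univ _⟩)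
  have hψeq : ∀ θ j, ψ θ j = if j = a θ then 1 else 0 := by
    intro θ j
    by_cases h : j = a θ
    · rw [if_pos h, h, ha]
    · rw [if_neg h, hψ0 θ j h]
  choose jstar hjBR hjval using fun θ => exists_minBR u v θ
  have hinterim : ∀ θ, interimV v ψ θ = v (a θ) := by
    intro θ
    simp [interimV, hψeq, mul_ite, Finset.sum_ite_eq']
  set M : J → Finset Θ := fun j => Finset.univ.filter (fun θ => a θ = j) with hM
  have hmemM : ∀ θ j, θ ∈ M j ↔ a θ = j := by intro θ j; simp [hM]
  have hθM : ∀ θ, θ ∈ M (a θ) := fun θ => (hmemM θ _).mpr rfl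
  set P : Finset Θ → Prop := fun m => ∃ j, m = M j ∧ m.Nonempty with hPdef
  have hPuniq : ∀ m (j j' : J), m = M j → m = M j' → m.Nonempty → j = j' := by
    intro m j j' h1 h2 hne
    obtain ⟨θ, hθ⟩ := hne
    have e1 := (hmemM θ j).mp (h1 ▸ hθ)
    have e2 := (hmemM θ j').mp (h2 ▸ hθ)
    rw [← e1, ← e2]
  set jOf : Finset Θ → J := fun m => if h : P m then h.choose else Classical.arbitrary J
    with hjOfdef
  have hjOfspec : ∀ m, P m → m = M (jOf m) := by
    intro m h
    rw [hjOfdef]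
    simp only [dif_pos h]
    exact h.choose_spec.1
  have hjOfM : ∀ j, (M j).Nonempty → jOf (M j) = j := by
    intro j hne
    have h : P (M j) := ⟨j, rfl, hne⟩
    exact hPuniq (M j) (jOf (M j)) j (hjOfspec _ h) rfl hne
  set θOf : Finset Θ → Θ := fun m =>
    if h : m.Nonempty then (Finset.exists_min_image m (underlineV u v) h).choose
    else Classical.arbitrary Θ with hθOfdef
  have hθOfspec : ∀ m : Finset Θ, m.Nonempty →
      θOf m ∈ m ∧ ∀ θ ∈ m, underlineV u v (θOf m) ≤ underlineV u v θ := by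
    intro m h
    rw [hθOfdef]
    simp only [dif_pos h]
    exact (Finset.exists_min_image m (underlineV u v) h).choose_spec
  set σ0 : Θ → Finset Θ → ℝ := fun θ m => if m = M (a θ) then 1 else 0 with hσ0
  set τ0 : Finset Θ → J → ℝ := fun m j =>
    if m.Nonempty then
      (if P m then (if j = jOf m then 1 else 0)
       else (if j = jstar (θOf m) then 1 else 0))
    else 0 with hτ0
  set S : J → ℝ := fun j => ∑ θ ∈ M j, μ0 θ with hS
  have hSpos : ∀ j, (M j).Nonempty → 0 < S j := fun j h =>
    Finset.sum_pos (fun θ _ => hμ_pos θ) h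
  set q0 : Finset Θ → Θ → ℝ := fun m θ =>
    if P m then (if a θ = jOf m then μ0 θ / S (jOf m) else 0)
    else if m.Nonempty then (if θ = θOf m then 1 else 0) else 0 with hq0
  -- facts about P
  have hPne : ∀ m, P m → m.Nonempty := fun m h => h.choose_spec.2
  have hPMne : ∀ m, P m → (M (jOf m)).Nonempty := by
    intro m h
    rw [← hjOfspec m h]
    exact hPne m h
  have hσchar : ∀ m, P m → ∀ θ', (M (a θ') = m ↔ a θ' = jOf m) := by
    intro m h θ'
    constructor
    · intro he
      have : θ' ∈ m := he ▸ hθM θ'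
      rw [hjOfspec m h] at this
      exact (hmemM θ' _).mp this
    · intro he
      rw [he, ← hjOfspec m h]
  -- on-path receiver behaviour
  have hτon : ∀ θ j, τ0 (M (a θ)) j = if j = a θ then 1 else 0 := by
    intro θ j
    have hne : (M (a θ)).Nonempty := ⟨θ, hθM θ⟩
    have hPm : P (M (a θ)) := ⟨a θ, rfl, hne⟩
    simp only [hτ0]
    simp only [if_pos hne, if_pos hPm, hjOfM _ hne]
  -- sender value of each message
  have hval : ∀ m : Finset Θ, m.Nonempty → (∑ j, v j * τ0 m j) =
      (if P m then v (jOf m) else v (jstar (θOf m))) := by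
    intro m hne
    by_cases hp : P m <;>
      simp [hτ0, hne, hp, mul_ite, Finset.sum_ite_eq']
  -- obedience in deterministic form
  have hobed' : ∀ j j', 0 ≤ ∑ θ ∈ M j, (u j θ - u j' θ) * μ0 θ := by
    intro j j'
    have h := hobed j j'
    have heq : ∑ θ, (u j θ - u j' θ) * ψ θ j * μ0 θ
        = ∑ θ ∈ M j, (u j θ - u j' θ) * μ0 θ := by
      rw [hM, Finset.sum_filter]
      apply Finset.sum_congr rfl
      intro θ _
      by_cases h2 : a θ = j
      · rw [if_pos h2, hψeq, if_pos h2.symm, mul_one]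
      · rw [if_neg h2, hψ0 θ j (fun hh => h2 hh.symm), mul_zero, zero_mul]
    rw [heq] at h
    exact h
  -- the equilibrium
  refine ⟨⟨σ0, τ0, q0, ?_, ?_, ?_, ?_, ?_, ?_, ?_, ?_, ?_, ?_, ?_⟩, ?_⟩
  · -- σ_nonneg
    intro θ m
    simp only [hσ0]
    positivity
  · -- σ_sum
    intro θ
    simp only [hσ0]
    simp [Finset.sum_ite_eq']
  · -- σ_verif
    intro θ m hpos
    simp only [hσ0] at hpos
    by_cases h : m = M (a θ)
    · rw [h]; exact hθM θ
    · simp [h] at hpos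
  · -- τ_nonneg
    intro m j
    simp only [hτ0]
    positivity
  · -- τ_sum
    intro m hne
    simp only [hτ0]
    by_cases hp : P m <;> simp [hne, hp, Finset.sum_ite_eq']
  · -- q_nonneg
    intro m θ
    simp only [hq0]
    by_cases hp : P m
    · simp only [if_pos hp]
      by_cases h2 : a θ = jOf m
      · rw [if_pos h2]
        exact div_nonneg (hμ_pos θ).le (hSpos _ (hPMne m hp)).le
      · rw [if_neg h2]
    · simp only [if_neg hp]
      positivity
  · -- q_sum
    intro m hne
    simp only [hq0]
    by_cases hp : P m
    · simp only [if_pos hp]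
      have hsum : ∑ θ, (if a θ = jOf m then μ0 θ / S (jOf m) else 0)
          = (∑ θ ∈ M (jOf m), μ0 θ) / S (jOf m) := by
        rw [Finset.sum_div, hM]; rw [Finset.sum_filter]
      rw [hsum]
      exact div_self (hSpos _ (hPMne m hp)).ne'
    · simp [hp, hne, Finset.sum_ite_eq']
  · -- q_supp
    intro m θ hpos
    simp only [hq0] at hpos
    by_cases hp : P m
    · rw [if_pos hp] at hpos
      by_cases h2 : a θ = jOf m
      · rw [hjOfspec m hp]
        exact (hmemM θ _).mpr h2
      · simp [h2] at hpos
    · rw [if_neg hp] at hpos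
      by_cases hne : m.Nonempty
      · rw [if_pos hne] at hpos
        by_cases h2 : θ = θOf m
        · rw [h2]; exact (hθOfspec m hne).1
        · simp [h2] at hpos
      · simp [hne] at hpos
  · -- sender_opt
    intro θ m hpos m' hθm'
    have hm : m = M (a θ) := by
      by_contra h
      simp only [hσ0] at hpos
      simp [h] at hpos
    have hne' : m'.Nonempty := ⟨θ, hθm'⟩
    have hrhs : ∑ j, v j * τ0 m j = v (a θ) := by
      rw [hm]
      simp [hτon, mul_ite, Finset.sum_ite_eq']
    rw [hrhs, hval m' hne']
    by_cases hp : P m'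
    · rw [if_pos hp]
      have : a θ = jOf m' := by
        have := hθm'
        rw [hjOfspec m' hp] at this
        exact (hmemM θ _).mp this
      rw [← this]
    · rw [if_neg hp, hjval]
      calc underlineV u v (θOf m') ≤ underlineV u v θ := (hθOfspec m' hne').2 θ hθm'
        _ ≤ interimV v ψ θ := hIC θ
        _ = v (a θ) := hinterim θ
  · -- receiver_opt
    intro m hne j hpos j'
    by_cases hp : P m
    · have hj : j = jOf m := by
        by_contra h
        simp only [hτ0] at hpos
        simp [hne, hp, h] at hpos
      subst hj
      have hq0eq : ∀ k, ∑ θ, u k θ * q0 m θ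
          = (∑ θ ∈ M (jOf m), u k θ * μ0 θ) / S (jOf m) := by
        intro k
        rw [Finset.sum_div, hM]; rw [Finset.sum_filter]
        apply Finset.sum_congr rfl
        intro θ _
        simp only [hq0]
        simp only [if_pos hp]
        by_cases h2 : a θ = jOf m
        · rw [if_pos h2, if_pos h2, mul_div_assoc]
        · rw [if_neg h2, if_neg h2, mul_zero]
      rw [hq0eq, hq0eq]
      apply div_le_div_of_nonneg_right ?_ (hSpos _ (hPMne m hp)).le
      have h := hobed' (jOf m) j'
      rw [Finset.sum_congr rfl (fun θ _ => by ring :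
        ∀ θ ∈ M (jOf m), (u (jOf m) θ - u j' θ) * μ0 θ
          = u (jOf m) θ * μ0 θ - u j' θ * μ0 θ), Finset.sum_sub_distrib] at h
      linarith
    · have hj : j = jstar (θOf m) := by
        by_contra h
        simp only [hτ0] at hpos
        simp [hne, hp, h] at hpos
      subst hj
      have hq0eq : ∀ k, ∑ θ, u k θ * q0 m θ = u k (θOf m) := by
        intro k
        simp only [hq0]
        simp [hp, hne, mul_ite, Finset.sum_ite_eq']
      rw [hq0eq, hq0eq]
      exact hjBR (θOf m) j'
  · -- bayes
    intro m hpos θ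
    have hex : ∃ θ0, m = M (a θ0) := by
      by_contra h
      push_neg at h
      have : ∑ θ', μ0 θ' * σ0 θ' m = 0 := by
        apply Finset.sum_eq_zero
        intro θ' _
        simp only [hσ0]
        simp [h θ']
      rw [this] at hpos
      exact lt_irrefl 0 hpos
    obtain ⟨θ0, hθ0⟩ := hex
    have hne : m.Nonempty := ⟨θ0, hθ0 ▸ hθM θ0⟩
    have hp : P m := ⟨a θ0, hθ0, hne⟩
    have hsum : ∑ θ', μ0 θ' * σ0 θ' m = S (jOf m) := by
      simp only [hS, hM, Finset.sum_filter]
      apply Finset.sum_congr rfl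
      intro θ' _
      simp only [hσ0]
      by_cases h2 : a θ' = jOf m
      · rw [if_pos h2, if_pos (((hσchar m hp θ').mpr h2).symm ▸ rfl : m = M (a θ')), mul_one]
      · rw [if_neg h2, if_neg (fun hh => h2 ((hσchar m hp θ').mp hh.symm)), mul_zero]
    rw [hsum]; simp only [hq0, hσ0]
    simp only [if_pos hp]
    by_cases h2 : a θ = jOf m
    · rw [if_pos h2, if_pos ((hσchar m hp θ).mpr h2).symm,
        div_mul_cancel₀ _ (hSpos _ (hPMne m hp)).ne', mul_one]
    · rw [if_neg h2, if_neg (fun hh => h2 ((hσchar m hp θ).mp hh.symm)), zero_mul, mul_zero]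
  · -- Induces
    intro θ j
    have : ∑ m, σ0 θ m * τ0 m j = τ0 (M (a θ)) j := by
      simp only [hσ0]
      simp [ite_mul, Finset.sum_ite_eq']
    rw [this, hτon, hψeq]
end

section
/- Let ψ̄ be a commitment outcome of the finite verifiable disclosure game that is also an equilibrium outcome. Then ψ̄ is deterministic: ψ̄(·|θ) is degenerate for every state θ (with positive prior probability). -/
open Finset

/-- a commitment outcome that is also an equilibrium outcome must
be deterministic (at every state; all states have positive prior mass). -/
theorem commitment_and_equilibrium_implies_deterministic
    {Θ J : Type} [Fintype Θ] [DecidableEq Θ] [Fintype J] [DecidableEq J]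
    [Nonempty J] [LinearOrder J]
    (μ0 : Θ → ℝ) (u : J → Θ → ℝ) (v : J → ℝ)
    (hμ_pos : ∀ θ, 0 < μ0 θ) (hμ_sum : ∑ θ, μ0 θ = 1)
    (hv : StrictMono v)
    (ψ : Θ → J → ℝ) (hout : IsOutcome ψ) (hobed : Obedient μ0 u ψ)
    (hmax : ∀ ψ' : Θ → J → ℝ, IsOutcome ψ' → Obedient μ0 u ψ' →
      exanteV μ0 v ψ' ≤ exanteV μ0 v ψ)
    (heq : ∃ E : PBE μ0 u v, Induces E ψ) :
    ∀ θ, ∃ j, ψ θ j = 1 := by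
  classical
  obtain ⟨E, hind⟩ := heq
  intro θ0
  by_contra hdeg
  push_neg at hdeg
  -- support of receiver mixing
  set S : Finset Θ → Finset J := fun m => Finset.univ.filter (fun j => 0 < E.τ m j) with hS
  set jstar : Finset Θ → J :=
    fun m => if h : (S m).Nonempty then (S m).max' h else Classical.arbitrary J with hjstar
  have hSne : ∀ m : Finset Θ, m.Nonempty → (S m).Nonempty := by
    intro m hm
    by_contra h
    rw [Finset.not_nonempty_iff_eq_empty] at h
    have h1 := E.τ_sum m hm
    have hz : ∀ j, E.τ m j = 0 := by
      intro j
      rcases (E.τ_nonneg m j).lt_or_eq with hlt | heq0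
      · exfalso
        have : j ∈ S m := by simp [hS, hlt]
        simp [h] at this
      · exact heq0.symm
    simp [hz] at h1
  have hjstar_pos : ∀ m : Finset Θ, m.Nonempty → 0 < E.τ m (jstar m) := by
    intro m hm
    have hne := hSne m hm
    have hmem : jstar m ∈ S m := by
      rw [hjstar]; simp only [dif_pos hne]; exact (S m).max'_mem hne
    simpa [hS] using hmem
  have hjstar_max : ∀ m : Finset Θ, ∀ j, 0 < E.τ m j → j ≤ jstar m := by
    intro m j hj
    have hne : (S m).Nonempty := ⟨j, by simp [hS, hj]⟩
    rw [hjstar]; simp only [dif_pos hne]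
    exact (S m).le_max' j (by simp [hS, hj])
  -- all messages on path at θ0 give equal sender payoff; existence of a mixing one
  have hM : ∃ m0 : Finset Θ, 0 < E.σ θ0 m0 ∧ ∀ j, E.τ m0 j ≠ 1 := by
    by_contra hcon
    push_neg at hcon
    -- every on-path message is degenerate
    have hMne : ∃ m1, 0 < E.σ θ0 m1 := by
      by_contra h
      push_neg at h
      have hz : ∀ m, E.σ θ0 m = 0 := fun m => le_antisymm (h m) (E.σ_nonneg θ0 m)
      have := E.σ_sum θ0
      simp [hz] at this
    obtain ⟨m1, hm1⟩ := hMne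
    obtain ⟨j1, hj1⟩ := hcon m1 hm1
    -- claim: for every on-path m, τ m j1 = 1
    have hkey : ∀ m, 0 < E.σ θ0 m → E.τ m j1 = 1 := by
      intro m hm
      obtain ⟨jm, hjm⟩ := hcon m hm
      -- payoffs equal
      have hle1 := E.sender_opt θ0 m hm m1 (E.σ_verif θ0 m1 hm1)
      have hle2 := E.sender_opt θ0 m1 hm1 m (E.σ_verif θ0 m hm)
      have heqpay : ∑ j, v j * E.τ m j = ∑ j, v j * E.τ m1 j := le_antisymm hle2 hle1
      -- τ m is degenerate at jm, τ m1 at j1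
      have hmne : m.Nonempty := ⟨θ0, E.σ_verif θ0 m hm⟩
      have hm1ne : m1.Nonempty := ⟨θ0, E.σ_verif θ0 m1 hm1⟩
      have hdeg1 : ∀ j, j ≠ jm → E.τ m j = 0 := by
        intro j hj
        have hsum := E.τ_sum m hmne
        have h2 : ∑ j' ∈ Finset.univ.erase jm, E.τ m j' = 0 := by
          have := Finset.add_sum_erase Finset.univ (E.τ m) (Finset.mem_univ jm)
          rw [hsum, hjm] at this
          linarith
        have := Finset.sum_eq_zero_iff_of_nonneg (fun j' _ => E.τ_nonneg m j') |>.mp h2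
        exact this j (Finset.mem_erase.mpr ⟨hj, Finset.mem_univ j⟩)
      have hdeg2 : ∀ j, j ≠ j1 → E.τ m1 j = 0 := by
        intro j hj
        have hsum := E.τ_sum m1 hm1ne
        have h2 : ∑ j' ∈ Finset.univ.erase j1, E.τ m1 j' = 0 := by
          have := Finset.add_sum_erase Finset.univ (E.τ m1) (Finset.mem_univ j1)
          rw [hsum, hj1] at this
          linarith
        have := Finset.sum_eq_zero_iff_of_nonneg (fun j' _ => E.τ_nonneg m1 j') |>.mp h2
        exact this j (Finset.mem_erase.mpr ⟨hj, Finset.mem_univ j⟩)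
      have hvm : ∑ j, v j * E.τ m j = v jm := by
        rw [Finset.sum_eq_single jm]
        · rw [hjm, mul_one]
        · intro j _ hj; rw [hdeg1 j hj, mul_zero]
        · intro h; exact absurd (Finset.mem_univ jm) h
      have hvm1 : ∑ j, v j * E.τ m1 j = v j1 := by
        rw [Finset.sum_eq_single j1]
        · rw [hj1, mul_one]
        · intro j _ hj; rw [hdeg2 j hj, mul_zero]
        · intro h; exact absurd (Finset.mem_univ j1) h
      have : v jm = v j1 := by rw [← hvm, ← hvm1, heqpay]
      have : jm = j1 := hv.injective this
      rw [← this]; exact hjm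
    -- then ψ θ0 j1 = 1
    have : ψ θ0 j1 = 1 := by
      rw [hind θ0 j1]
      have : ∀ m : Finset Θ, E.σ θ0 m * E.τ m j1 = E.σ θ0 m := by
        intro m
        rcases (E.σ_nonneg θ0 m).lt_or_eq with hlt | heq0
        · rw [hkey m hlt, mul_one]
        · rw [← heq0, zero_mul]
      rw [Finset.sum_congr rfl (fun m _ => this m)]
      exact E.σ_sum θ0
    exact hdeg j1 this
  obtain ⟨m0, hm0σ, hm0mix⟩ := hM
  -- the tie-broken outcome
  set ψ' : Θ → J → ℝ :=
    fun θ j => ∑ m, E.σ θ m * (if j = jstar m then 1 else 0) with hψ'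
  have hψ'out : IsOutcome ψ' := by
    constructor
    · intro θ j
      apply Finset.sum_nonneg
      intro m _
      apply mul_nonneg (E.σ_nonneg θ m)
      split <;> norm_num
    · intro θ
      rw [hψ']
      rw [Finset.sum_comm]
      have : ∀ m : Finset Θ, ∑ j, E.σ θ m * (if j = jstar m then (1:ℝ) else 0) = E.σ θ m := by
        intro m
        rw [← Finset.mul_sum]
        simp
      rw [Finset.sum_congr rfl (fun m _ => this m)]
      exact E.σ_sum θ
  have hψ'obed : Obedient μ0 u ψ' := by
    intro j j'
    have hrw : ∑ θ, (u j θ - u j' θ) * ψ' θ j * μ0 θ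
        = ∑ m, (if j = jstar m then (1:ℝ) else 0) * ∑ θ, (u j θ - u j' θ) * E.σ θ m * μ0 θ := by
      rw [hψ']
      simp only [Finset.mul_sum, Finset.sum_mul]
      rw [Finset.sum_comm]
      apply Finset.sum_congr rfl
      intro m _
      apply Finset.sum_congr rfl
      intro θ _
      ring
    rw [hrw]
    apply Finset.sum_nonneg
    intro m _
    by_cases hj : j = jstar m
    · simp only [if_pos hj, one_mul]
      -- show the m-term is nonneg
      set P : ℝ := ∑ θ, μ0 θ * E.σ θ m with hP
      rcases (Finset.sum_nonneg (fun θ _ => mul_nonneg (hμ_pos θ).le (E.σ_nonneg θ m)) :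
          (0:ℝ) ≤ P).lt_or_eq with hPpos | hPzero
      · -- m is on path; use Bayes and receiver optimality
        have hmne : m.Nonempty := by
          by_contra hme
          rw [Finset.not_nonempty_iff_eq_empty] at hme
          have hz : ∀ θ, E.σ θ m = 0 := by
            intro θ
            rcases (E.σ_nonneg θ m).lt_or_eq with hlt | heq0
            · exfalso
              have := E.σ_verif θ m hlt
              rw [hme] at this
              exact absurd this (Finset.notMem_empty θ)
            · exact heq0.symm
          simp [hz] at hPpos
        have hbayes := E.bayes m hPpos
        have hterm : ∑ θ, (u j θ - u j' θ) * E.σ θ m * μ0 θ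
            = P * (∑ θ, u j θ * E.q m θ - ∑ θ, u j' θ * E.q m θ) := by
          rw [mul_sub, Finset.mul_sum, Finset.mul_sum, ← Finset.sum_sub_distrib]
          apply Finset.sum_congr rfl
          intro θ _
          have hb : E.q m θ * P = μ0 θ * E.σ θ m := hbayes θ
          linear_combination (u j' θ - u j θ) * hb
        rw [hterm]
        apply mul_nonneg hPpos.le
        have hτpos : 0 < E.τ m (jstar m) := hjstar_pos m hmne
        rw [← hj] at hτpos
        have := E.receiver_opt m hmne j hτpos j'
        linarith
      · -- m off path: every σ θ m = 0
        have hz : ∀ θ, μ0 θ * E.σ θ m = 0 := by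
          intro θ
          have := (Finset.sum_eq_zero_iff_of_nonneg
            (fun θ _ => mul_nonneg (hμ_pos θ).le (E.σ_nonneg θ m))).mp hPzero.symm
          exact this θ (Finset.mem_univ θ)
        have hz' : ∀ θ, E.σ θ m = 0 := by
          intro θ
          have := hz θ
          rcases mul_eq_zero.mp this with h | h
          · exact absurd h (ne_of_gt (hμ_pos θ))
          · exact h
        apply le_of_eq
        symm
        apply Finset.sum_eq_zero
        intro θ _
        rw [hz' θ]
        ring
    · simp [hj]
  -- per-message sender payoff comparison
  have hSle : ∀ m : Finset Θ, m.Nonempty → ∑ j, v j * E.τ m j ≤ v (jstar m) := by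
    intro m hm
    calc ∑ j, v j * E.τ m j ≤ ∑ j, v (jstar m) * E.τ m j := by
          apply Finset.sum_le_sum
          intro j _
          rcases (E.τ_nonneg m j).lt_or_eq with hlt | heq0
          · exact mul_le_mul_of_nonneg_right (hv.monotone (hjstar_max m j hlt)) hlt.le
          · rw [← heq0]; simp
      _ = v (jstar m) := by rw [← Finset.mul_sum, E.τ_sum m hm, mul_one]
  have hm0ne : m0.Nonempty := ⟨θ0, E.σ_verif θ0 m0 hm0σ⟩
  have hSlt : ∑ j, v j * E.τ m0 j < v (jstar m0) := by
    -- there is j1 ≠ jstar m0 with τ m0 j1 > 0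
    have hτsum := E.τ_sum m0 hm0ne
    have hτjs := hjstar_pos m0 hm0ne
    have hlt1 : E.τ m0 (jstar m0) < 1 :=
      lt_of_le_of_ne (by
        have := Finset.single_le_sum (fun j (_ : j ∈ Finset.univ) => E.τ_nonneg m0 j)
          (Finset.mem_univ (jstar m0))
        rw [hτsum] at this; exact this) (hm0mix (jstar m0))
    have hrest : 0 < ∑ j ∈ Finset.univ.erase (jstar m0), E.τ m0 j := by
      have := Finset.add_sum_erase Finset.univ (E.τ m0) (Finset.mem_univ (jstar m0))
      rw [hτsum] at this
      linarith
    obtain ⟨j1, hj1mem, hj1pos⟩ : ∃ j1 ∈ Finset.univ.erase (jstar m0), 0 < E.τ m0 j1 := by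
      by_contra h
      push_neg at h
      have : ∑ j ∈ Finset.univ.erase (jstar m0), E.τ m0 j ≤ 0 :=
        Finset.sum_nonpos (fun j hjm => h j hjm)
      linarith
    have hj1ne : j1 ≠ jstar m0 := (Finset.mem_erase.mp hj1mem).1
    have hj1lt : j1 < jstar m0 := lt_of_le_of_ne (hjstar_max m0 j1 hj1pos) hj1ne
    have hcalc : ∑ j, v j * E.τ m0 j < ∑ j, v (jstar m0) * E.τ m0 j := by
      apply Finset.sum_lt_sum
      · intro j _
        rcases (E.τ_nonneg m0 j).lt_or_eq with hlt | heq0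
        · exact mul_le_mul_of_nonneg_right (hv.monotone (hjstar_max m0 j hlt)) hlt.le
        · rw [← heq0]; simp
      · exact ⟨j1, Finset.mem_univ j1,
          mul_lt_mul_of_pos_right (hv hj1lt) hj1pos⟩
    calc ∑ j, v j * E.τ m0 j < ∑ j, v (jstar m0) * E.τ m0 j := hcalc
      _ = v (jstar m0) := by rw [← Finset.mul_sum, hτsum, mul_one]
  -- ex-ante payoff comparison
  set A : Θ → ℝ := fun θ => ∑ m, (μ0 θ * E.σ θ m) * (∑ j, v j * E.τ m j) with hA
  set B : Θ → ℝ := fun θ => ∑ m, (μ0 θ * E.σ θ m) * v (jstar m) with hB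
  have hAψ : exanteV μ0 v ψ = ∑ θ, A θ := by
    unfold exanteV
    apply Finset.sum_congr rfl
    intro θ _
    rw [hA]
    have : ∑ j, v j * ψ θ j = ∑ m, E.σ θ m * (∑ j, v j * E.τ m j) := by
      simp only [hind θ, Finset.mul_sum]
      rw [Finset.sum_comm]
      exact Finset.sum_congr rfl (fun m _ => Finset.sum_congr rfl (fun j _ => by ring))
    rw [this, Finset.sum_mul]
    apply Finset.sum_congr rfl
    intro m _
    ring
  have hBψ : exanteV μ0 v ψ' = ∑ θ, B θ := by
    unfold exanteV
    apply Finset.sum_congr rfl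
    intro θ _
    rw [hB]
    have : ∑ j, v j * ψ' θ j = ∑ m, E.σ θ m * v (jstar m) := by
      rw [hψ']
      simp only [Finset.mul_sum]
      rw [Finset.sum_comm]
      apply Finset.sum_congr rfl
      intro m _
      rw [Finset.sum_eq_single (jstar m)]
      · simp; ring
      · intro j _ hj; simp [hj]
      · intro h; exact absurd (Finset.mem_univ (jstar m)) h
    rw [this, Finset.sum_mul]
    apply Finset.sum_congr rfl
    intro m _
    ring
  have hABle : ∀ θ, A θ ≤ B θ := by
    intro θ
    rw [hA, hB]
    apply Finset.sum_le_sum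
    intro m _
    rcases (E.σ_nonneg θ m).lt_or_eq with hlt | heq0
    · apply mul_le_mul_of_nonneg_left
      · exact hSle m ⟨θ, E.σ_verif θ m hlt⟩
      · exact mul_nonneg (hμ_pos θ).le hlt.le
    · rw [← heq0]; ring_nf; simp
  have hABlt : A θ0 < B θ0 := by
    rw [hA, hB]
    apply Finset.sum_lt_sum
    · intro m _
      rcases (E.σ_nonneg θ0 m).lt_or_eq with hlt | heq0
      · apply mul_le_mul_of_nonneg_left
        · exact hSle m ⟨θ0, E.σ_verif θ0 m hlt⟩
        · exact mul_nonneg (hμ_pos θ0).le hlt.le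
      · rw [← heq0]; ring_nf; simp
    · exact ⟨m0, Finset.mem_univ m0,
        mul_lt_mul_of_pos_left hSlt (mul_pos (hμ_pos θ0) hm0σ)⟩
  have hlt : exanteV μ0 v ψ < exanteV μ0 v ψ' := by
    rw [hAψ, hBψ]
    apply Finset.sum_lt_sum (fun θ _ => hABle θ) ⟨θ0, Finset.mem_univ θ0, hABlt⟩
  exact absurd (hmax ψ' hψ'out hψ'obed) (not_le.mpr hlt)
end

section
/- Suppose the receiver has two actions, J = {1,2}, over a finite state space Θ. Then there exists a commitment outcome that is incentive-compatible: an obedient outcome ψ maximizing the sender's ex-ante payoff among obedient outcomes, satisfying ψ(2|θ) = 1 for every state θ with u(2,θ) > u(1,θ). -/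
open Finset

/-- with two receiver actions (`0` = low, `1` = high) over a finite
state space, there exists an incentive-compatible commitment outcome: an
obedient outcome maximizing the sender's ex-ante payoff among obedient outcomes
and putting probability one on action `1` wherever it is the receiver's unique
best response. -/
theorem IC_commitment_outcome_exists_two_actions
    {Θ : Type} [Fintype Θ] [DecidableEq Θ]
    (μ0 : Θ → ℝ) (u : Fin 2 → Θ → ℝ) (v : Fin 2 → ℝ)
    (hμ_pos : ∀ θ, 0 < μ0 θ) (hμ_sum : ∑ θ, μ0 θ = 1)
    (hv : v 0 < v 1) :
    ∃ ψ : Θ → Fin 2 → ℝ, IsOutcome ψ ∧ Obedient μ0 u ψ ∧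
      (∀ ψ' : Θ → Fin 2 → ℝ, IsOutcome ψ' → Obedient μ0 u ψ' →
        exanteV μ0 v ψ' ≤ exanteV μ0 v ψ) ∧
      (∀ θ, u 0 θ < u 1 θ → ψ θ 1 = 1) := by
  classical
  have h01 : ¬((0 : Fin 2) = 1) := by decide
  have h11 : ((1 : Fin 2) = 1) := rfl
  -- evaluation maps are continuous
  have hcont_eval : ∀ (θ : Θ) (j : Fin 2), Continuous fun ψ : Θ → Fin 2 → ℝ => ψ θ j :=
    fun θ j => (continuous_apply j).comp (continuous_apply θ)
  set K : Set (Θ → Fin 2 → ℝ) := {ψ | IsOutcome ψ ∧ Obedient μ0 u ψ} with hKdef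
  -- K is contained in a compact box
  have hsub : K ⊆ Set.pi Set.univ
      (fun _ : Θ => Set.pi Set.univ fun _ : Fin 2 => Set.Icc (0:ℝ) 1) := by
    rintro ψ ⟨⟨h0, h1⟩, -⟩ θ _ j _
    refine ⟨h0 θ j, ?_⟩
    have hle : ψ θ j ≤ ∑ j', ψ θ j' :=
      Finset.single_le_sum (fun i _ => h0 θ i) (Finset.mem_univ j)
    rw [h1 θ] at hle
    exact hle
  have hbox : IsCompact (Set.pi Set.univ
      (fun _ : Θ => Set.pi Set.univ fun _ : Fin 2 => Set.Icc (0:ℝ) 1)) :=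
    isCompact_univ_pi fun _ => isCompact_univ_pi fun _ => isCompact_Icc
  -- K is closed
  have hclosed : IsClosed K := by
    have heq : K = (⋂ θ, ⋂ j, {ψ : Θ → Fin 2 → ℝ | 0 ≤ ψ θ j}) ∩
        ((⋂ θ, {ψ : Θ → Fin 2 → ℝ | ∑ j, ψ θ j = 1}) ∩
         ⋂ j, ⋂ j', {ψ : Θ → Fin 2 → ℝ | 0 ≤ ∑ θ, (u j θ - u j' θ) * ψ θ j * μ0 θ}) := by
      ext ψ
      simp only [hKdef, IsOutcome, Obedient, Set.mem_setOf_eq, Set.mem_inter_iff,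
        Set.mem_iInter]
      tauto
    rw [heq]
    refine IsClosed.inter ?_ (IsClosed.inter ?_ ?_)
    · exact isClosed_iInter fun θ => isClosed_iInter fun j =>
        isClosed_le continuous_const (hcont_eval θ j)
    · exact isClosed_iInter fun θ => isClosed_eq
        (continuous_finset_sum _ fun j _ => hcont_eval θ j) continuous_const
    · exact isClosed_iInter fun j => isClosed_iInter fun j' =>
        isClosed_le continuous_const
          (continuous_finset_sum _ fun θ _ =>
            ((continuous_const.mul (hcont_eval θ j)).mul continuous_const))
  have hKc : IsCompact K := hbox.of_isClosed_subset hclosed hsub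
  -- K is nonempty: pointwise best response
  have hne : K.Nonempty := by
    set α : Θ → Fin 2 → ℝ := fun θ j => if u 0 θ < u 1 θ then (if j = 1 then 1 else 0)
        else (if j = 0 then 1 else 0) with hαdef
    have hα0 : ∀ θ, α θ 0 = if u 0 θ < u 1 θ then 0 else 1 := by
      intro θ; rw [hαdef]; simp [h01]
    have hα1 : ∀ θ, α θ 1 = if u 0 θ < u 1 θ then 1 else 0 := by
      intro θ; rw [hαdef]; simp [h01]
    refine ⟨α, ⟨?_, ?_⟩, ?_⟩
    · intro θ j; rw [hαdef]; dsimp only; split_ifs <;> norm_num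
    · intro θ; rw [Fin.sum_univ_two, hα0, hα1]; split_ifs <;> norm_num
    · intro j j'
      refine Finset.sum_nonneg fun θ _ => ?_
      fin_cases j <;> fin_cases j' <;>
        simp only [Fin.mk_zero, Fin.mk_one, Fin.isValue, sub_self, zero_mul, le_refl,
          hα0, hα1]
      · split_ifs with h
        · simp
        · have : u 1 θ ≤ u 0 θ := le_of_not_gt h
          nlinarith [(hμ_pos θ).le]
      · split_ifs with h
        · nlinarith [(hμ_pos θ).le]
        · simp
  -- exanteV is continuous
  have hcont : Continuous (exanteV μ0 v) := by
    unfold exanteV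
    exact continuous_finset_sum _ fun θ _ =>
      (continuous_finset_sum _ fun j _ => continuous_const.mul (hcont_eval θ j)).mul
        continuous_const
  obtain ⟨φ, hφK, hφmax⟩ := hKc.exists_isMaxOn hne hcont.continuousOn
  obtain ⟨⟨hφ0, hφ1⟩, hφob⟩ := hφK
  have hφsum : ∀ θ, φ θ 0 + φ θ 1 = 1 := by
    intro θ; have := hφ1 θ; rwa [Fin.sum_univ_two] at this
  have hφle1 : ∀ θ j, φ θ j ≤ 1 := by
    intro θ j
    have hle : φ θ j ≤ ∑ j', φ θ j' :=
      Finset.single_le_sum (fun i _ => hφ0 θ i) (Finset.mem_univ j)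
    rw [hφ1 θ] at hle
    exact hle
  -- modify the maximizer on states where action 1 is strictly better
  set ψ : Θ → Fin 2 → ℝ :=
    fun θ j => if u 0 θ < u 1 θ then (if j = 1 then 1 else 0) else φ θ j with hψdef
  have hψ0v : ∀ θ, ψ θ 0 = if u 0 θ < u 1 θ then 0 else φ θ 0 := by
    intro θ; rw [hψdef]; simp [h01]
  have hψ1v : ∀ θ, ψ θ 1 = if u 0 θ < u 1 θ then 1 else φ θ 1 := by
    intro θ; rw [hψdef]; simp
  have hψ0 : ∀ θ j, 0 ≤ ψ θ j := by
    intro θ j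
    rw [hψdef]
    dsimp only
    split_ifs with h h2
    · norm_num
    · norm_num
    · exact hφ0 θ j
  have hψ1 : ∀ θ, ∑ j, ψ θ j = 1 := by
    intro θ
    rw [Fin.sum_univ_two, hψ0v, hψ1v]
    split_ifs with h
    · norm_num
    · exact hφsum θ
  have hψob : Obedient μ0 u ψ := by
    intro j j'
    fin_cases j <;> fin_cases j' <;>
      simp only [Fin.mk_zero, Fin.mk_one, Fin.isValue, sub_self, zero_mul]
    · exact le_of_eq (by simp)
    · -- j = 0, j' = 1
      refine le_trans (hφob 0 1) (Finset.sum_le_sum fun θ _ => ?_)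
      rw [hψ0v]
      split_ifs with h
      · nlinarith [mul_nonneg (mul_nonneg (sub_nonneg.2 h.le) (hφ0 θ 0)) (hμ_pos θ).le]
      · exact le_rfl
    · -- j = 1, j' = 0
      refine le_trans (hφob 1 0) (Finset.sum_le_sum fun θ _ => ?_)
      rw [hψ1v]
      split_ifs with h
      · nlinarith [mul_nonneg (mul_nonneg (sub_nonneg.2 h.le)
          (sub_nonneg.2 (hφle1 θ 1))) (hμ_pos θ).le]
      · exact le_rfl
    · exact le_of_eq (by simp)
  have hψge : exanteV μ0 v φ ≤ exanteV μ0 v ψ := by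
    unfold exanteV
    refine Finset.sum_le_sum fun θ _ => ?_
    rw [Fin.sum_univ_two, Fin.sum_univ_two, hψ0v, hψ1v]
    split_ifs with h
    · have h1 : φ θ 1 = 1 - φ θ 0 := by linarith [hφsum θ]
      rw [h1]
      nlinarith [mul_nonneg (mul_nonneg (sub_nonneg.2 hv.le) (hφ0 θ 0)) (hμ_pos θ).le]
    · exact le_rfl
  refine ⟨ψ, ⟨hψ0, hψ1⟩, hψob, ?_, ?_⟩
  · intro ψ' hψ'o hψ'ob
    exact le_trans (hφmax ⟨hψ'o, hψ'ob⟩) hψge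
  · intro θ h
    rw [hψ1v, if_pos h]
end

section
/- With two receiver actions over a finite state space, modifying any obedient outcome ψ̄ by setting the probability of action 2 to one on the set A₂ = {θ : u(2,θ) ≥ u(1,θ)} (and leaving ψ̄ unchanged elsewhere) yields an outcome ψ̃ that is still obedient and has weakly higher ex-ante sender payoff. -/
open Finset

/-- with two actions, raising the probability of action `1` to one
on `A₂ = {θ : u 0 θ ≤ u 1 θ}` preserves obedience and weakly increases the
sender's ex-ante payoff. -/
theorem raising_high_action_preserves_obedience
    {Θ : Type} [Fintype Θ] [DecidableEq Θ]
    (μ0 : Θ → ℝ) (u : Fin 2 → Θ → ℝ) (v : Fin 2 → ℝ)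
    (hμ_pos : ∀ θ, 0 < μ0 θ) (hμ_sum : ∑ θ, μ0 θ = 1)
    (hv : v 0 < v 1)
    (ψ : Θ → Fin 2 → ℝ) (hout : IsOutcome ψ) (hobed : Obedient μ0 u ψ)
    (ψ' : Θ → Fin 2 → ℝ)
    (hψ' : ∀ θ, (u 0 θ ≤ u 1 θ → ψ' θ 1 = 1 ∧ ψ' θ 0 = 0) ∧
      (¬ u 0 θ ≤ u 1 θ → ψ' θ = ψ θ)) :
    Obedient μ0 u ψ' ∧ exanteV μ0 v ψ ≤ exanteV μ0 v ψ' := by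
  obtain ⟨hpos, hsum⟩ := hout
  have hsum2 : ∀ θ, ψ θ 0 + ψ θ 1 = 1 := by
    intro θ; have := hsum θ; simpa [Fin.sum_univ_two] using this
  have hle1 : ∀ θ, ψ θ 1 ≤ 1 := by
    intro θ
    nlinarith [hpos θ 0, hsum2 θ]
  constructor
  · intro j j'
    fin_cases j <;> fin_cases j'
    · simp
    · -- j = 0, j' = 1
      show 0 ≤ ∑ θ, (u 0 θ - u 1 θ) * ψ' θ 0 * μ0 θ
      have h := hobed 0 1
      refine le_trans h (Finset.sum_le_sum ?_)
      intro θ _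
      by_cases hθ : u 0 θ ≤ u 1 θ
      · have h0 := (hψ' θ).1 hθ
        rw [h0.2]
        have h3 : 0 ≤ (u 1 θ - u 0 θ) * (ψ θ 0 * μ0 θ) :=
          mul_nonneg (sub_nonneg.2 hθ) (mul_nonneg (hpos θ 0) (hμ_pos θ).le)
        nlinarith [h3]
      · rw [(hψ' θ).2 hθ]
    · -- j = 1, j' = 0
      show 0 ≤ ∑ θ, (u 1 θ - u 0 θ) * ψ' θ 1 * μ0 θ
      have h := hobed 1 0
      refine le_trans h (Finset.sum_le_sum ?_)
      intro θ _
      by_cases hθ : u 0 θ ≤ u 1 θ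
      · have h1 := (hψ' θ).1 hθ
        rw [h1.1]
        have h3 : 0 ≤ (u 1 θ - u 0 θ) * (1 - ψ θ 1) * μ0 θ :=
          mul_nonneg (mul_nonneg (sub_nonneg.2 hθ) (by linarith [hle1 θ])) (hμ_pos θ).le
        nlinarith [h3]
      · rw [(hψ' θ).2 hθ]
    · simp
  · unfold exanteV
    refine Finset.sum_le_sum ?_
    intro θ _
    by_cases hθ : u 0 θ ≤ u 1 θ
    · have h1 := (hψ' θ).1 hθ
      rw [Fin.sum_univ_two, Fin.sum_univ_two, h1.1, h1.2]
      have h2 : 0 ≤ (v 1 - v 0) * ψ θ 0 * μ0 θ :=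
        mul_nonneg (mul_nonneg (sub_nonneg.2 hv.le) (hpos θ 0)) (hμ_pos θ).le
      have h3 : ψ θ 1 = 1 - ψ θ 0 := by linarith [hsum2 θ]
      rw [h3]
      nlinarith [h2]
    · rw [(hψ' θ).2 hθ]
end

section
/- Suppose Θ is finite, J = {1,2}, the sender's payoffs are v(2) = 1, v(1) = 0, and δ(θ) = u(2,θ) − u(1,θ) takes distinct values at distinct states. Let V* be the sender's commitment payoff (maximum of Σ_θ ψ(2|θ)μ₀(θ) over obedient outcomes ψ). Then for every ε > 0 there exists γ > 0 such that if μ₀(θ) < γ for all θ ∈ Θ, then there is a deterministic, IC, obedient outcome α with |V* − V_α| < ε, where V_α = Σ_θ α(2|θ)μ₀(θ). In particular V* − V_α ≤ max_θ μ₀(θ). -/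
open Finset

/-- two actions, finite states, sender payoffs `v = (0,1)`, and
`δ(θ) = u(2,θ) − u(1,θ)` taking distinct values at distinct states. For every
`ε > 0` there is `γ > 0` such that for any full-support prior with all atoms
below `γ`, some deterministic, IC, obedient outcome `α` attains the commitment
payoff `V*` within `ε`; in particular `V* − V_α` is at most the largest atom. -/
theorem approximate_commitment_payoff_two_actions
    {Θ : Type} [Fintype Θ] [DecidableEq Θ] [Nonempty Θ]
    (u : Fin 2 → Θ → ℝ)
    (hδ : ∀ θ θ', θ ≠ θ' → u 1 θ - u 0 θ ≠ u 1 θ' - u 0 θ') :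
    ∀ ε > (0 : ℝ), ∃ γ > (0 : ℝ), ∀ μ0 : Θ → ℝ,
      (∀ θ, 0 < μ0 θ) → ∑ θ, μ0 θ = 1 → (∀ θ, μ0 θ < γ) →
      ∃ α : Θ → Fin 2 → ℝ,
        IsOutcome α ∧ Deterministic α ∧
        IC u ![0, 1] α ∧ Obedient μ0 u α ∧
        |sSup {x : ℝ | ∃ ψ : Θ → Fin 2 → ℝ, IsOutcome ψ ∧ Obedient μ0 u ψ ∧
            x = exanteV μ0 ![0, 1] ψ} - exanteV μ0 ![0, 1] α| < ε ∧
        sSup {x : ℝ | ∃ ψ : Θ → Fin 2 → ℝ, IsOutcome ψ ∧ Obedient μ0 u ψ ∧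
            x = exanteV μ0 ![0, 1] ψ} - exanteV μ0 ![0, 1] α ≤
          Finset.univ.sup' Finset.univ_nonempty μ0 := by
  classical
  intro ε hε
  refine ⟨ε, hε, fun μ0 hpos hsum hlt => ?_⟩
  set δf : Θ → ℝ := fun θ => u 1 θ - u 0 θ with hδd
  set P : Finset Θ := Finset.univ.filter (fun θ => 0 < δf θ) with hPdef
  set C : Finset (Finset Θ) := Finset.univ.filter (fun S : Finset Θ =>
      P ⊆ S ∧ (∀ θ ∈ S, ∀ θ', δf θ < δf θ' → θ' ∈ S) ∧
      0 ≤ ∑ θ ∈ S, δf θ * μ0 θ) with hCdef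
  have hPC : P ∈ C := by
    rw [hCdef, Finset.mem_filter]
    refine ⟨Finset.mem_univ _, subset_rfl, ?_, ?_⟩
    · intro θ hθ θ' hθ'
      rw [hPdef, Finset.mem_filter] at hθ ⊢
      exact ⟨Finset.mem_univ _, lt_trans hθ.2 hθ'⟩
    · refine Finset.sum_nonneg fun θ hθ => ?_
      rw [hPdef, Finset.mem_filter] at hθ
      exact le_of_lt (mul_pos hθ.2 (hpos θ))
  obtain ⟨S, hSC, hSmax⟩ := Finset.exists_max_image C Finset.card ⟨P, hPC⟩
  rw [hCdef, Finset.mem_filter] at hSC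
  obtain ⟨-, hPS, hUp, hS0⟩ := hSC
  set a : Θ → ℝ := fun θ => if θ ∈ S then 1 else 0 with had
  set α : Θ → Fin 2 → ℝ := fun θ j => if j = 0 then 1 - a θ else a θ with hαd
  have ha01 : ∀ θ, a θ = 0 ∨ a θ = 1 := by
    intro θ; rw [had]; by_cases h : θ ∈ S <;> simp [h]
  have hα0 : ∀ θ, α θ 0 = 1 - a θ := fun θ => by simp [hαd]
  have hα1 : ∀ θ, α θ 1 = a θ := fun θ => by simp [hαd]
  have hout : IsOutcome α := by
    constructor
    · intro θ j
      fin_cases j <;> rcases ha01 θ with h | h <;> simp [hαd, h]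
    · intro θ
      rw [Fin.sum_univ_two, hα0, hα1]; ring
  have hdet : Deterministic α := by
    intro θ
    by_cases h : θ ∈ S
    · exact ⟨1, by rw [hα1, had]; simp [h]⟩
    · exact ⟨0, by rw [hα0, had]; simp [h]⟩
  have hδnonpos : ∀ θ, θ ∉ S → δf θ ≤ 0 := by
    intro θ hθ
    by_contra h
    have hmem : θ ∈ P := by
      rw [hPdef, Finset.mem_filter]
      exact ⟨Finset.mem_univ _, lt_of_not_ge h⟩
    exact hθ (hPS hmem)
  -- IC
  have hic : IC u ![0, 1] α := by
    intro θ
    have hbdd : BddBelow ((![0, 1] : Fin 2 → ℝ) '' {j | ∀ j', u j' θ ≤ u j θ}) := by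
      refine ⟨0, fun x hx => ?_⟩
      obtain ⟨j, -, rfl⟩ := hx
      fin_cases j <;> norm_num
    have hinterim : interimV ![0, 1] α θ = a θ := by
      rw [interimV, Fin.sum_univ_two, hα0, hα1]; norm_num
    by_cases hδθ : 0 < δf θ
    · have h01 : u 0 θ ≤ u 1 θ := by
        have h : (0:ℝ) < u 1 θ - u 0 θ := hδθ
        linarith
      have hmem : (1:ℝ) ∈ (![0, 1] : Fin 2 → ℝ) '' {j | ∀ j', u j' θ ≤ u j θ} := by
        refine ⟨1, fun j' => ?_, by norm_num⟩
        fin_cases j'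
        · exact h01
        · exact le_refl _
      have h1 : underlineV u ![0, 1] θ ≤ 1 := csInf_le hbdd hmem
      have ha1 : a θ = 1 := by
        rw [had]
        simp [hPS (by rw [hPdef, Finset.mem_filter]; exact ⟨Finset.mem_univ _, hδθ⟩)]
      rw [hinterim, ha1]; exact h1
    · have h10 : u 1 θ ≤ u 0 θ := by
        have h : u 1 θ - u 0 θ ≤ 0 := le_of_not_gt hδθ
        linarith
      have hmem : (0:ℝ) ∈ (![0, 1] : Fin 2 → ℝ) '' {j | ∀ j', u j' θ ≤ u j θ} := by
        refine ⟨0, fun j' => ?_, by norm_num⟩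
        fin_cases j'
        · exact le_refl _
        · exact h10
      have h1 : underlineV u ![0, 1] θ ≤ 0 := csInf_le hbdd hmem
      have h2 : 0 ≤ a θ := by rcases ha01 θ with h | h <;> rw [h] <;> norm_num
      rw [hinterim]; linarith
  -- obedience
  have hobS : ∑ θ, δf θ * α θ 1 * μ0 θ = ∑ θ ∈ S, δf θ * μ0 θ := by
    rw [← Finset.univ_inter S, ← Finset.sum_ite_mem]
    refine Finset.sum_congr rfl fun θ _ => ?_
    rw [hα1, had]
    by_cases h : θ ∈ S <;> simp [h]
  have hobedα : Obedient μ0 u α := by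
    intro j j'
    fin_cases j <;> fin_cases j'
    · simp
    · show (0:ℝ) ≤ ∑ θ, (u 0 θ - u 1 θ) * α θ 0 * μ0 θ
      refine Finset.sum_nonneg fun θ _ => ?_
      by_cases h : θ ∈ S
      · have h0 : α θ 0 = 0 := by simp [hαd, had, h]
        rw [h0]; simp
      · have h0 : α θ 0 = 1 := by simp [hαd, had, h]
        have h1 : u 1 θ - u 0 θ ≤ 0 := hδnonpos θ h
        rw [h0]
        nlinarith [hpos θ]
    · have h : (0:ℝ) ≤ ∑ θ, δf θ * α θ 1 * μ0 θ := by rw [hobS]; exact hS0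
      exact h
    · simp
  -- ex ante payoffs
  have hex : ∀ ψ : Θ → Fin 2 → ℝ, exanteV μ0 ![0, 1] ψ = ∑ θ, ψ θ 1 * μ0 θ := by
    intro ψ
    rw [exanteV]
    refine Finset.sum_congr rfl fun θ _ => ?_
    rw [Fin.sum_univ_two]
    norm_num
  have hVα : exanteV μ0 ![0, 1] α = ∑ θ ∈ S, μ0 θ := by
    rw [hex, ← Finset.univ_inter S, ← Finset.sum_ite_mem]
    refine Finset.sum_congr rfl fun θ _ => ?_
    rw [hα1, had]
    by_cases h : θ ∈ S <;> simp [h]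
  -- the key upper bound on all obedient outcomes
  have hkey : ∃ m : ℝ, 0 ≤ m ∧ m < ε ∧ (∃ θm, m ≤ μ0 θm) ∧
      ∀ ψ : Θ → Fin 2 → ℝ, IsOutcome ψ → Obedient μ0 u ψ →
        exanteV μ0 ![0, 1] ψ ≤ (∑ θ ∈ S, μ0 θ) + m := by
    by_cases hSU : S = Finset.univ
    · refine ⟨0, le_refl _, hε, ⟨Classical.arbitrary Θ, (hpos _).le⟩, ?_⟩
      intro ψ hψ hob
      rw [hex, hSU, add_zero]
      refine Finset.sum_le_sum fun θ _ => ?_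
      have h1 := hψ.1 θ 0
      have h2 := hψ.2 θ
      rw [Fin.sum_univ_two] at h2
      nlinarith [hpos θ, hψ.1 θ 1]
    · have hne : (Finset.univ \ S).Nonempty := by
        rw [Finset.sdiff_nonempty]
        exact fun h => hSU (Finset.univ_subset_iff.mp h)
      obtain ⟨θs, hθs, hθmax⟩ := Finset.exists_max_image (Finset.univ \ S) δf hne
      have hθnS : θs ∉ S := (Finset.mem_sdiff.mp hθs).2
      have hchar : ∀ θ, θ ∈ S ↔ δf θs < δf θ := by
        intro θ
        constructor
        · intro hθ
          rcases lt_trichotomy (δf θs) (δf θ) with h | h | h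
          · exact h
          · exact absurd h.symm (hδ θ θs (fun he => hθnS (he ▸ hθ)))
          · exact absurd (hUp θ hθ θs h) hθnS
        · intro h
          by_contra hc
          exact absurd (hθmax θ (Finset.mem_sdiff.mpr ⟨Finset.mem_univ _, hc⟩)) (not_le.mpr h)
      have hinsC : insert θs S ∉ C := by
        intro h
        have hcard := hSmax _ h
        rw [Finset.card_insert_of_notMem hθnS] at hcard
        omega
      have hkey2 : δf θs * μ0 θs + ∑ θ ∈ S, δf θ * μ0 θ < 0 := by
        by_contra hc
        push_neg at hc
        apply hinsC
        rw [hCdef, Finset.mem_filter]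
        refine ⟨Finset.mem_univ _, hPS.trans (Finset.subset_insert _ _), ?_, ?_⟩
        · intro θ hθ θ' hθ'
          rcases Finset.mem_insert.mp hθ with rfl | hθS
          · exact Finset.mem_insert_of_mem ((hchar θ').mpr hθ')
          · exact Finset.mem_insert_of_mem (hUp θ hθS θ' hθ')
        · rw [Finset.sum_insert hθnS]; linarith
      have hδneg : δf θs < 0 := by
        by_contra h
        push_neg at h
        nlinarith [mul_nonneg h (hpos θs).le]
      refine ⟨μ0 θs, (hpos θs).le, hlt θs, ⟨θs, le_refl _⟩, ?_⟩
      intro ψ hψ hob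
      rw [hex]
      set l : ℝ := (-δf θs)⁻¹ with hld
      have hne0 : -δf θs ≠ 0 := ne_of_gt (by linarith)
      have hl : 0 < l := by rw [hld]; exact inv_pos.mpr (by linarith)
      have h2' : l * -δf θs = 1 := by rw [hld]; exact inv_mul_cancel₀ hne0
      have hlθ : l * δf θs = -1 := by linear_combination -h2'
      have hb1 : ∀ θ, ψ θ 1 ≤ 1 := fun θ => by
        have h2 := hψ.2 θ; rw [Fin.sum_univ_two] at h2; linarith [hψ.1 θ 0]
      have hb0 : ∀ θ, 0 ≤ ψ θ 1 := fun θ => hψ.1 θ 1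
      have hobψ : (0:ℝ) ≤ ∑ θ, δf θ * ψ θ 1 * μ0 θ := hob 1 0
      have step1 : ∑ θ, ψ θ 1 * μ0 θ ≤ ∑ θ, (1 + l * δf θ) * (ψ θ 1 * μ0 θ) := by
        have he : ∑ θ, (1 + l * δf θ) * (ψ θ 1 * μ0 θ)
            = ∑ θ, ψ θ 1 * μ0 θ + l * ∑ θ, δf θ * ψ θ 1 * μ0 θ := by
          rw [Finset.mul_sum, ← Finset.sum_add_distrib]
          exact Finset.sum_congr rfl fun θ _ => by ring
        rw [he]
        nlinarith [mul_nonneg hl.le hobψ]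
      have step2 : ∑ θ, (1 + l * δf θ) * (ψ θ 1 * μ0 θ)
          ≤ ∑ θ, (if θ ∈ S then (1 + l * δf θ) * μ0 θ else 0) := by
        refine Finset.sum_le_sum fun θ _ => ?_
        by_cases h : θ ∈ S
        · simp only [h, if_true]
          have hδgt : δf θs < δf θ := (hchar θ).mp h
          have hmono := mul_le_mul_of_nonneg_left hδgt.le hl.le
          have hc : 0 ≤ 1 + l * δf θ := by linarith
          have hle' : ψ θ 1 * μ0 θ ≤ μ0 θ := by nlinarith [hb1 θ, hb0 θ, (hpos θ).le]
          exact mul_le_mul_of_nonneg_left hle' hc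
        · simp only [h, if_false]
          have hδle : δf θ ≤ δf θs :=
            hθmax θ (Finset.mem_sdiff.mpr ⟨Finset.mem_univ _, h⟩)
          have hmono := mul_le_mul_of_nonneg_left hδle hl.le
          have hc : 1 + l * δf θ ≤ 0 := by linarith
          nlinarith [hc, mul_nonneg (hb0 θ) (hpos θ).le]
      have step3 : ∑ θ, (if θ ∈ S then (1 + l * δf θ) * μ0 θ else 0)
          = ∑ θ ∈ S, μ0 θ + l * ∑ θ ∈ S, δf θ * μ0 θ := by
        rw [Finset.sum_ite_mem, Finset.univ_inter, Finset.mul_sum, ← Finset.sum_add_distrib]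
        exact Finset.sum_congr rfl fun θ _ => by ring
      have step4 : l * ∑ θ ∈ S, δf θ * μ0 θ ≤ μ0 θs := by
        have h1 : ∑ θ ∈ S, δf θ * μ0 θ ≤ -δf θs * μ0 θs := by linarith
        have h3 := mul_le_mul_of_nonneg_left h1 hl.le
        have h4 : l * (-δf θs * μ0 θs) = μ0 θs := by linear_combination μ0 θs * h2'
        linarith
      rw [step3] at step2
      linarith
  obtain ⟨m, hm0, hmε, ⟨θm, hmθ⟩, hub⟩ := hkey
  have hmsup : m ≤ Finset.univ.sup' Finset.univ_nonempty μ0 :=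
    le_trans hmθ (Finset.le_sup' μ0 (Finset.mem_univ θm))
  have hbdd : BddAbove {x : ℝ | ∃ ψ : Θ → Fin 2 → ℝ, IsOutcome ψ ∧ Obedient μ0 u ψ ∧
      x = exanteV μ0 ![0, 1] ψ} := by
    refine ⟨(∑ θ ∈ S, μ0 θ) + m, fun x hx => ?_⟩
    obtain ⟨ψ, h1, h2, rfl⟩ := hx
    exact hub ψ h1 h2
  have hmemα : exanteV μ0 ![0, 1] α ∈ {x : ℝ | ∃ ψ : Θ → Fin 2 → ℝ, IsOutcome ψ ∧
      Obedient μ0 u ψ ∧ x = exanteV μ0 ![0, 1] ψ} := ⟨α, hout, hobedα, rfl⟩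
  have hle : exanteV μ0 ![0, 1] α ≤ sSup {x : ℝ | ∃ ψ : Θ → Fin 2 → ℝ, IsOutcome ψ ∧
      Obedient μ0 u ψ ∧ x = exanteV μ0 ![0, 1] ψ} := le_csSup hbdd hmemα
  have hge : sSup {x : ℝ | ∃ ψ : Θ → Fin 2 → ℝ, IsOutcome ψ ∧ Obedient μ0 u ψ ∧
      x = exanteV μ0 ![0, 1] ψ} ≤ exanteV μ0 ![0, 1] α + m := by
    rw [hVα]
    refine csSup_le ⟨_, hmemα⟩ fun x hx => ?_
    obtain ⟨ψ, h1, h2, rfl⟩ := hx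
    exact hub ψ h1 h2
  refine ⟨α, hout, hdet, hic, hobedα, ?_, ?_⟩
  · rw [abs_of_nonneg (by linarith)]; linarith
  · linarith
end

section
/- Consider the binary-state example with Θ = {1,2}, prior μ₀(1) = 0.7, actions J = {1,2}, sender payoffs v(1)=0, v(2)=1, and receiver payoffs u(j,θ) = 1 if j = θ and 0 otherwise. The outcome α* with α*(2|2) = 1 and α*(2|1) = 3/7 is incentive-compatible and obedient, but it is not an equilibrium outcome of the verifiable disclosure game: any equilibrium inducing it would require the sender in state 1 to mix between messages yielding different expected payoffs, contradicting sender optimality. -/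
open Finset

lemma mem_fin2_aux (m : Finset (Fin 2)) (h : (0 : Fin 2) ∈ m) : m = {0} ∨ m = {0,1} := by
  revert h; revert m; decide

/-- the Kamenica–Goldstein example. State space `Fin 2`
(`0` = innocent, `1` = guilty), actions `Fin 2` (`0` = acquit, `1` = convict),
prior `(0.7, 0.3)`, sender payoffs `v = (0, 1)`, receiver matches the state.
The outcome `α*` with `α*(convict | guilty) = 1`, `α*(convict | innocent) = 3/7`
is IC and obedient but is not an equilibrium outcome. -/
theorem KG_example_IC_obedient_not_equilibrium :
    let μ0 : Fin 2 → ℝ := ![0.7, 0.3]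
    let v : Fin 2 → ℝ := ![0, 1]
    let u : Fin 2 → Fin 2 → ℝ := fun j θ => if j = θ then 1 else 0
    let α : Fin 2 → Fin 2 → ℝ := ![![4/7, 3/7], ![0, 1]]
    IC u v α ∧ Obedient μ0 u α ∧ ¬ ∃ E : PBE μ0 u v, Induces E α := by
  intro μ0 v u α
  refine ⟨?_, ?_, ?_⟩
  · -- IC
    intro θ
    have key : ∀ θ0 : Fin 2, {j : Fin 2 | ∀ j', u j' θ0 ≤ u j θ0} = {θ0} := by
      intro θ0
      ext j
      simp only [Set.mem_setOf_eq, Set.mem_singleton_iff]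
      constructor
      · intro h
        by_contra hne
        have := h θ0
        simp [u, hne] at this
        linarith
      · rintro rfl j'
        by_cases h' : j' = j <;> simp [u, h']
    rw [show underlineV u v θ = sInf (v '' {j : Fin 2 | ∀ j', u j' θ ≤ u j θ}) from rfl,
      key θ]
    simp only [Set.image_singleton, csInf_singleton]
    fin_cases θ <;>
      simp [interimV, Fin.sum_univ_two, v, α] <;> norm_num
  · -- Obedient
    intro j j'
    fin_cases j <;> fin_cases j' <;>
      simp [Fin.sum_univ_two, u, α, μ0] <;> norm_num
  · -- Not an equilibrium outcome
    rintro ⟨E, hI⟩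
    -- sender payoff from message m is τ m 1
    have hv : ∀ m : Finset (Fin 2), ∑ j, v j * E.τ m j = E.τ m 1 := by
      intro m; simp [Fin.sum_univ_two, v]
    -- induced probabilities
    have h0 : ∑ m, E.σ 0 m * E.τ m 1 = 3/7 := by
      have := hI 0 1; simp [α] at this; linarith
    have h1 : ∑ m, E.σ 1 m * E.τ m 1 = 1 := by
      have := hI 1 1; simp [α] at this; linarith
    -- τ m 1 ≤ 1 for nonempty m
    have hτle : ∀ m : Finset (Fin 2), m.Nonempty → E.τ m 1 ≤ 1 := by
      intro m hm
      have hs := E.τ_sum m hm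
      have h0' := E.τ_nonneg m 0
      simp [Fin.sum_univ_two] at hs
      linarith
    -- Step A: every message supported in state 1 has τ m 1 = 1
    have stepA : ∀ m : Finset (Fin 2), 0 < E.σ 1 m → E.τ m 1 = 1 := by
      intro m hm
      by_contra hne
      have hmem : (1 : Fin 2) ∈ m := E.σ_verif 1 m hm
      have hlt : E.τ m 1 < 1 := lt_of_le_of_ne (hτle m ⟨1, hmem⟩) hne
      have : ∑ x, E.σ 1 x * E.τ x 1 < ∑ x, E.σ 1 x := by
        apply Finset.sum_lt_sum
        · intro i _
          rcases lt_or_eq_of_le (E.σ_nonneg 1 i) with hp | hz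
          · have hle : E.τ i 1 ≤ 1 := hτle i ⟨1, E.σ_verif 1 i hp⟩
            nlinarith
          · rw [← hz]; simp
        · exact ⟨m, Finset.mem_univ m, by nlinarith⟩
      rw [h1, E.σ_sum 1] at this
      exact lt_irrefl 1 this
    -- Step B: state 0 has a supported message
    have stepB : ∃ m0, 0 < E.σ 0 m0 := by
      by_contra hno
      push_neg at hno
      have : ∑ m, E.σ 0 m = 0 := Finset.sum_eq_zero fun m _ =>
        le_antisymm (hno m) (E.σ_nonneg 0 m)
      rw [E.σ_sum 0] at this; norm_num at this
    obtain ⟨m0, hm0⟩ := stepB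
    have hm0mem : (0 : Fin 2) ∈ m0 := E.σ_verif 0 m0 hm0
    -- Step C: τ m0 1 = 3/7
    have stepC : E.τ m0 1 = 3/7 := by
      have hcongr : ∀ m : Finset (Fin 2), E.σ 0 m * E.τ m 1 = E.σ 0 m * E.τ m0 1 := by
        intro m
        rcases lt_or_eq_of_le (E.σ_nonneg 0 m) with hp | hz
        · have h1' := E.sender_opt 0 m hp m0 hm0mem
          have h2' := E.sender_opt 0 m0 hm0 m (E.σ_verif 0 m hp)
          rw [hv, hv] at h1' h2'
          rw [le_antisymm h2' h1']
        · rw [← hz]; ring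
      calc E.τ m0 1 = (∑ m, E.σ 0 m) * E.τ m0 1 := by rw [E.σ_sum 0]; ring
        _ = ∑ m, E.σ 0 m * E.τ m 1 := by
            rw [Finset.sum_mul]; exact (Finset.sum_congr rfl fun m _ => (hcongr m).symm)
        _ = 3/7 := h0
    -- Step D: case on σ 1 {0,1}
    rcases lt_or_eq_of_le (E.σ_nonneg 1 {0,1}) with hp | hz
    · -- state 1 sends {0,1} with positive prob
      have hτ01 : E.τ ({0,1} : Finset (Fin 2)) 1 = 1 := stepA _ hp
      have := E.sender_opt 0 m0 hm0 {0,1} (by decide)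
      rw [hv, hv, hτ01, stepC] at this
      norm_num at this
    · -- σ 1 {0,1} = 0
      have hτpos : 0 < E.τ m0 1 := by rw [stepC]; norm_num
      have hro := E.receiver_opt m0 ⟨0, hm0mem⟩ 1 hτpos 0
      simp only [Fin.sum_univ_two] at hro
      have hu : u 0 0 = 1 ∧ u 0 1 = 0 ∧ u 1 0 = 0 ∧ u 1 1 = 1 := by
        refine ⟨?_, ?_, ?_, ?_⟩ <;> simp [u]
      rw [hu.1, hu.2.1, hu.2.2.1, hu.2.2.2] at hro
      -- hro : q m0 0 ≤ q m0 1 (after simplification)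
      have hqsum := E.q_sum m0 ⟨0, hm0mem⟩
      simp [Fin.sum_univ_two] at hqsum
      have hq1 : E.q m0 1 = 0 := by
        rcases mem_fin2_aux m0 hm0mem with h | h
        · -- m0 = {0}: q m0 1 = 0 since 1 ∉ {0}
          by_contra hne
          have : 0 < E.q m0 1 := lt_of_le_of_ne (E.q_nonneg m0 1) (Ne.symm hne)
          have := E.q_supp m0 1 this
          rw [h] at this
          simp at this
        · -- m0 = {0,1}: use Bayes
          have hsum : ∑ θ', μ0 θ' * E.σ θ' m0 = 0.7 * E.σ 0 m0 := by
            simp only [Fin.sum_univ_two, μ0, h, ← hz]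
            norm_num
          have hpos' : 0 < ∑ θ', μ0 θ' * E.σ θ' m0 := by rw [hsum]; positivity
          have hb := E.bayes m0 hpos' 1
          rw [hsum] at hb
          have : μ0 1 * E.σ 1 m0 = 0 := by rw [h, ← hz]; ring
          rw [this] at hb
          have h7 : (0.7 : ℝ) * E.σ 0 m0 ≠ 0 := by positivity
          exact (mul_eq_zero.mp hb).resolve_right h7
      rw [hq1] at hro hqsum
      linarith
end

section
/- In the verifiable disclosure game with finite state space, there exists a perfect Bayesian equilibrium in which the sender's interim payoff in every state θ equals underline{v}(θ) = min{v(j) : u(j,θ) ≥ u(j',θ) for all j'}: namely, the sender fully reveals the state (sends {θ} in state θ), the receiver plays the lowest complete-information best response after each singleton message, and off-path beliefs are skeptical. Consequently, underline{v}(θ) is a tight lower bound on sender interim equilibrium payoffs. -/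
open Finset

/-!
Under full revelation the receiver learns `θ` and plays its lowest best response, which pays the
sender exactly `underlineV θ`. After any other message `m ∋ θ` the skeptical receiver attributes
`m` to a state of `m` whose lowest best response is smallest and plays that action; it is no higher
than the lowest best response at `θ`, so, `v` being increasing, no deviation pays. All strategies
and beliefs are point masses, and Bayes' rule is trivial on the singleton messages.
-/

open Function

section PointMass

variable {α : Type} [DecidableEq α]

def pointMass (a : α) (x : α) : ℝ := if x = a then 1 else 0

@[simp] lemma pointMass_self (a : α) : pointMass a a = 1 := if_pos rfl

lemma pointMass_comm (a x : α) : pointMass a x = pointMass x a := by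
  simp only [pointMass, eq_comm]

lemma pointMass_map {β : Type} [DecidableEq β] {f : α → β} (hf : Injective f) (a x : α) :
    pointMass (f a) (f x) = pointMass a x := by
  simp only [pointMass, hf.eq_iff]

lemma mul_pointMass_comm (g : α → ℝ) (a x : α) :
    pointMass a x * g a = g x * pointMass x a := by
  by_cases h : x = a
  · subst h; ring
  · simp [pointMass, h, Ne.symm h]

lemma pointMass_nonneg (a x : α) : 0 ≤ pointMass a x := by
  unfold pointMass; split_ifs <;> norm_num

lemma eq_of_pointMass_pos {a x : α} (h : 0 < pointMass a x) : x = a := by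
  by_contra hx
  simp [pointMass, hx] at h

variable [Fintype α]

@[simp] lemma sum_mul_pointMass (f : α → ℝ) (a : α) : ∑ x, f x * pointMass a x = f a := by
  simp [pointMass]

@[simp] lemma sum_pointMass (a : α) : ∑ x, pointMass a x = 1 := by
  simpa using sum_mul_pointMass (fun _ => 1) a

end PointMass

namespace PBE

variable {Θ J : Type} [Fintype Θ] [DecidableEq Θ] [Fintype J] [DecidableEq J]

/-- Bayes' rule holds on path because `s` is injective and `b` recovers the sender's state from
its own message. -/
def ofPure (μ0 : Θ → ℝ) (u : J → Θ → ℝ) (v : J → ℝ)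
    (s : Θ → Finset Θ) (hs_mem : ∀ θ, θ ∈ s θ) (hs_inj : Injective s)
    (a : ∀ m : Finset Θ, m.Nonempty → J) (b : ∀ m : Finset Θ, m.Nonempty → Θ)
    (hb_mem : ∀ m hm, b m hm ∈ m) (hb_s : ∀ θ, b (s θ) ⟨θ, hs_mem θ⟩ = θ)
    (h_sender : ∀ θ m (hθ : θ ∈ m), v (a m ⟨θ, hθ⟩) ≤ v (a (s θ) ⟨θ, hs_mem θ⟩))
    (h_receiver : ∀ m hm j, u j (b m hm) ≤ u (a m hm) (b m hm)) :
    PBE μ0 u v where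
  σ θ := pointMass (s θ)
  τ m := if hm : m.Nonempty then pointMass (a m hm) else 0
  q m := if hm : m.Nonempty then pointMass (b m hm) else 0
  σ_nonneg θ := pointMass_nonneg (s θ)
  σ_sum θ := sum_pointMass (s θ)
  σ_verif θ m h := eq_of_pointMass_pos h ▸ hs_mem θ
  τ_nonneg m j := by
    split_ifs
    exacts [pointMass_nonneg _ j, le_rfl]
  τ_sum m hm := by simp [hm]
  q_nonneg m θ := by
    split_ifs
    exacts [pointMass_nonneg _ θ, le_rfl]
  q_sum m hm := by simp [hm]
  q_supp m θ h := by
    split_ifs at h with hm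
    · exact eq_of_pointMass_pos h ▸ hb_mem m hm
    · exact absurd h (lt_irrefl 0)
  sender_opt θ m h m' hθ := by
    obtain rfl := eq_of_pointMass_pos h
    rw [dif_pos ⟨θ, hθ⟩, dif_pos ⟨θ, hs_mem θ⟩, sum_mul_pointMass, sum_mul_pointMass]
    exact h_sender θ m' hθ
  receiver_opt m hm j h j' := by
    simp only [hm, dite_true] at h ⊢
    obtain rfl := eq_of_pointMass_pos h
    simpa using h_receiver m hm j'
  bayes m h θ := by
    obtain ⟨θ₀, -, hθ₀⟩ := exists_ne_zero_of_sum_ne_zero h.ne'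
    obtain rfl : m = s θ₀ := eq_of_pointMass_pos <|
      (pointMass_nonneg _ _).lt_of_ne (right_ne_zero_of_mul hθ₀).symm
    have h_evidence : ∑ θ', μ0 θ' * pointMass (s θ') (s θ₀) = μ0 θ₀ := by
      simp only [pointMass_map hs_inj, pointMass_comm _ θ₀, sum_mul_pointMass]
    rw [h_evidence, dif_pos ⟨θ₀, hs_mem θ₀⟩, hb_s, pointMass_map hs_inj]
    exact mul_pointMass_comm μ0 θ₀ θ

end PBE

noncomputable section BestResponse

variable {Θ J : Type} [Fintype J]

def bestResponses (u : J → Θ → ℝ) (θ : Θ) : Finset J := {j | ∀ j', u j' θ ≤ u j θ}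

lemma mem_bestResponses {u : J → Θ → ℝ} {θ : Θ} {j : J} :
    j ∈ bestResponses u θ ↔ ∀ j', u j' θ ≤ u j θ := by
  simp [bestResponses]

variable [Nonempty J]

lemma bestResponses_nonempty (u : J → Θ → ℝ) (θ : Θ) : (bestResponses u θ).Nonempty := by
  obtain ⟨j, -, hj⟩ := univ.exists_max_image (u · θ) univ_nonempty
  exact ⟨j, mem_bestResponses.2 fun j' => hj j' (mem_univ j')⟩

variable [LinearOrder J]

def lowestBestResponse (u : J → Θ → ℝ) (θ : Θ) : J :=
  (bestResponses u θ).min' (bestResponses_nonempty u θ)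

lemma le_lowestBestResponse (u : J → Θ → ℝ) (θ : Θ) (j : J) :
    u j θ ≤ u (lowestBestResponse u θ) θ :=
  mem_bestResponses.1 ((bestResponses u θ).min'_mem _) j

lemma lowestBestResponse_le {u : J → Θ → ℝ} {θ : Θ} {j : J} (hj : ∀ j', u j' θ ≤ u j θ) :
    lowestBestResponse u θ ≤ j :=
  (bestResponses u θ).min'_le j (mem_bestResponses.2 hj)

lemma underlineV_eq_lowestBestResponse (u : J → Θ → ℝ) {v : J → ℝ} (hv : Monotone v) (θ : Θ) :
    underlineV u v θ = v (lowestBestResponse u θ) := by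
  have hmem : lowestBestResponse u θ ∈ {j | ∀ j', u j' θ ≤ u j θ} := le_lowestBestResponse u θ
  refine le_antisymm ?_ ?_
  · exact csInf_le ((Set.toFinite _).image v).bddBelow (Set.mem_image_of_mem v hmem)
  · refine le_csInf ⟨_, Set.mem_image_of_mem v hmem⟩ ?_
    rintro _ ⟨j, hj, rfl⟩
    exact hv (lowestBestResponse_le hj)

/-- The paper's skeptical belief after `m` is any distribution on `m ∩ A_j̲`; we take a point mass
on one such state. -/
def skepticalState (u : J → Θ → ℝ) (m : Finset Θ) (hm : m.Nonempty) : Θ :=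
  (m.exists_min_image (lowestBestResponse u) hm).choose

lemma skepticalState_mem (u : J → Θ → ℝ) {m : Finset Θ} (hm : m.Nonempty) :
    skepticalState u m hm ∈ m :=
  (m.exists_min_image (lowestBestResponse u) hm).choose_spec.1

lemma lowestBestResponse_skepticalState_le (u : J → Θ → ℝ) {m : Finset Θ} {θ : Θ} (hθ : θ ∈ m) :
    lowestBestResponse u (skepticalState u m ⟨θ, hθ⟩) ≤ lowestBestResponse u θ :=
  (m.exists_min_image (lowestBestResponse u) ⟨θ, hθ⟩).choose_spec.2 θ hθ

lemma skepticalState_singleton (u : J → Θ → ℝ) (θ : Θ) (h : ({θ} : Finset Θ).Nonempty) :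
    skepticalState u {θ} h = θ :=
  mem_singleton.1 (skepticalState_mem u h)

end BestResponse

theorem fully_revealing_equilibrium_attains_lower_bound_general
    {Θ J : Type} [Fintype Θ] [Fintype J]
    [Nonempty J] [LinearOrder J]
    (μ0 : Θ → ℝ) (u : J → Θ → ℝ) (v : J → ℝ)
    (hv : StrictMono v) :
    ∃ E : PBE μ0 u v,
      (∀ θ, E.σ θ ({θ} : Finset Θ) = 1) ∧
      (∀ θ, ∑ j, v j * E.τ ({θ} : Finset Θ) j = underlineV u v θ) := by
  classical
  let a m hm := lowestBestResponse u (skepticalState u m hm)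
  have h_sender (θ : Θ) (m : Finset Θ) (hθ : θ ∈ m) :
      v (a m ⟨θ, hθ⟩) ≤ v (a {θ} (singleton_nonempty θ)) := by
    simp only [a, skepticalState_singleton]
    exact hv.monotone (lowestBestResponse_skepticalState_le u hθ)
  refine ⟨PBE.ofPure μ0 u v singleton mem_singleton_self singleton_injective a
    (skepticalState u) (fun _ => skepticalState_mem u) (fun θ => skepticalState_singleton u θ _)
    h_sender (fun _ _ => le_lowestBestResponse u _), fun θ => pointMass_self _, fun θ => ?_⟩
  simp only [PBE.ofPure, dif_pos (singleton_nonempty θ), sum_mul_pointMass, a,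
    skepticalState_singleton, underlineV_eq_lowestBestResponse u hv.monotone]

/-- there is a fully revealing equilibrium in which the sender's
interim payoff in every state `θ` is exactly his lowest complete-information
payoff `underlineV θ`; hence `underlineV` is a tight lower bound. -/
theorem fully_revealing_equilibrium_attains_lower_bound
    {Θ J : Type} [Fintype Θ] [DecidableEq Θ] [Fintype J] [DecidableEq J]
    [Nonempty J] [LinearOrder J]
    (μ0 : Θ → ℝ) (u : J → Θ → ℝ) (v : J → ℝ)
    (hμ_pos : ∀ θ, 0 < μ0 θ) (hμ_sum : ∑ θ, μ0 θ = 1)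
    (hv : StrictMono v) :
    ∃ E : PBE μ0 u v,
      (∀ θ, E.σ θ ({θ} : Finset Θ) = 1) ∧
      (∀ θ, ∑ j, v j * E.τ ({θ} : Finset Θ) j = underlineV u v θ) :=
  fully_revealing_equilibrium_attains_lower_bound_general μ0 u v hv
end

section
/- Let Θ be finite, J = {1,2}, with full-support prior μ₀, δ(θ) = u(2,θ) − u(1,θ), and sender payoffs v(2) > v(1). Define A₂ = {θ : δ(θ) ≥ 0}. Then every commitment outcome ψ̄ (obedient outcome maximizing ex-ante sender payoff) satisfies ψ̄(2|θ) = 1 for all θ with δ(θ) > 0. -/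
open Finset

/-- with two actions, every commitment outcome puts probability
one on the high action at every state where the receiver strictly prefers it;
hence every commitment outcome is incentive-compatible. -/
theorem commitment_outcome_is_IC_two_actions
    {Θ : Type} [Fintype Θ] [DecidableEq Θ]
    (μ0 : Θ → ℝ) (u : Fin 2 → Θ → ℝ) (v : Fin 2 → ℝ)
    (hμ_pos : ∀ θ, 0 < μ0 θ) (hμ_sum : ∑ θ, μ0 θ = 1)
    (hv : v 0 < v 1)
    (ψ : Θ → Fin 2 → ℝ) (hout : IsOutcome ψ) (hobed : Obedient μ0 u ψ)
    (hmax : ∀ ψ' : Θ → Fin 2 → ℝ, IsOutcome ψ' → Obedient μ0 u ψ' →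
      exanteV μ0 v ψ' ≤ exanteV μ0 v ψ) :
    ∀ θ, u 0 θ < u 1 θ → ψ θ 1 = 1 := by
  intro θ0 hδ
  by_contra hne
  obtain ⟨hnn, hsum⟩ := hout
  have hs : ψ θ0 0 + ψ θ0 1 = 1 := by
    have := hsum θ0; simpa [Fin.sum_univ_two] using this
  have hψ1_lt : ψ θ0 1 < 1 := by
    have h0 := hnn θ0 0
    exact lt_of_le_of_ne (by linarith) hne
  have hψ0_pos : 0 < ψ θ0 0 := by linarith
  set ψ' : Θ → Fin 2 → ℝ :=
    fun θ j => if θ = θ0 then (if j = 1 then 1 else 0) else ψ θ j with hψ'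
  have hout' : IsOutcome ψ' := by
    constructor
    · intro θ j
      by_cases h : θ = θ0
      · simp only [hψ', h, if_true]
        split <;> norm_num
      · simpa [hψ', h] using hnn θ j
    · intro θ
      by_cases h : θ = θ0
      · simp [hψ', h, Fin.sum_univ_two]
      · simpa [hψ', h, Fin.sum_univ_two] using hsum θ
  have hobed' : Obedient μ0 u ψ' := by
    intro j j'
    have key : ∑ θ, (u j θ - u j' θ) * ψ θ j * μ0 θ
        ≤ ∑ θ, (u j θ - u j' θ) * ψ' θ j * μ0 θ := by
      apply Finset.sum_le_sum
      intro θ _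
      by_cases h : θ = θ0
      · subst h
        have hμ := (hμ_pos θ).le
        have h0 := hnn θ 0
        have h1 := hnn θ 1
        fin_cases j <;> fin_cases j' <;> simp [hψ'] <;>
          nlinarith [mul_nonneg (mul_nonneg (by linarith : (0:ℝ) ≤ u 1 θ - u 0 θ) hμ)
            (by linarith : (0:ℝ) ≤ 1 - ψ θ 1),
            mul_nonneg (mul_nonneg (by linarith : (0:ℝ) ≤ u 1 θ - u 0 θ) hμ) h0]
      · simp [hψ', h]
    exact le_trans (hobed j j') key
  have hlt : exanteV μ0 v ψ < exanteV μ0 v ψ' := by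
    unfold exanteV
    apply Finset.sum_lt_sum
    · intro θ _
      by_cases h : θ = θ0
      · subst h
        have hμ := (hμ_pos θ).le
        have hkey : v 1 * μ0 θ - (v 0 * ψ θ 0 + v 1 * ψ θ 1) * μ0 θ
            = (v 1 - v 0) * ψ θ 0 * μ0 θ := by
          have h1 : ψ θ 1 = 1 - ψ θ 0 := by linarith
          rw [h1]; ring
        simp only [hψ', if_true, Fin.sum_univ_two]
        norm_num
        nlinarith [mul_nonneg (mul_nonneg (by linarith : (0:ℝ) ≤ v 1 - v 0) hψ0_pos.le) hμ]
      · simp [hψ', h]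
    · refine ⟨θ0, Finset.mem_univ θ0, ?_⟩
      have hμ := hμ_pos θ0
      have hkey : v 1 * μ0 θ0 - (v 0 * ψ θ0 0 + v 1 * ψ θ0 1) * μ0 θ0
          = (v 1 - v 0) * ψ θ0 0 * μ0 θ0 := by
        have h1 : ψ θ0 1 = 1 - ψ θ0 0 := by linarith
        rw [h1]; ring
      simp only [hψ', if_true, Fin.sum_univ_two]
      norm_num
      nlinarith [mul_pos (mul_pos (by linarith : (0:ℝ) < v 1 - v 0) hψ0_pos) hμ]
  have := hmax ψ' hout' hobed'
  linarith
end

section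
/- Fix a finite verifiable disclosure game and an equilibrium (σ, τ, q) inducing outcome ψ̄. Define the tie-broken receiver strategy τ̃ by τ̃(j*|m) = 1 where j* = max supp τ(·|m), and let ψ̃ be the outcome induced by (σ, τ̃). Then ψ̃ is obedient, and if the set T = {θ : ψ̄(·|θ) non-degenerate} has μ₀(T) > 0, then the sender's ex-ante payoff satisfies V_ψ̃ > V_ψ̄. -/
open Finset

open scoped Classical in
/-- breaking the receiver's ties in favor of the sender-preferred
(highest) action in the support of `τ(·|m)` yields an obedient outcome; and if
the original equilibrium outcome is non-degenerate on a set of states of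
positive prior probability, the tie-broken outcome gives the sender a strictly
higher ex-ante payoff. -/
theorem tie_breaking_improves_sender_payoff
    {Θ J : Type} [Fintype Θ] [DecidableEq Θ] [Fintype J] [DecidableEq J]
    [Nonempty J] [LinearOrder J]
    (μ0 : Θ → ℝ) (u : J → Θ → ℝ) (v : J → ℝ)
    (hμ_pos : ∀ θ, 0 < μ0 θ) (hμ_sum : ∑ θ, μ0 θ = 1)
    (hv : StrictMono v)
    (E : PBE μ0 u v) (ψ : Θ → J → ℝ) (hψ : Induces E ψ)
    (τ' : Finset Θ → J → ℝ)
    (hτ' : ∀ m : Finset Θ, m.Nonempty → ∃ jstar,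
      0 < E.τ m jstar ∧ (∀ j, 0 < E.τ m j → j ≤ jstar) ∧
      τ' m jstar = 1 ∧ ∀ j, j ≠ jstar → τ' m j = 0)
    (ψ' : Θ → J → ℝ)
    (hψ' : ∀ θ j, ψ' θ j = ∑ m, E.σ θ m * τ' m j) :
    Obedient μ0 u ψ' ∧
    (0 < ∑ θ ∈ Finset.univ.filter
        (fun θ => ∃ j j', j ≠ j' ∧ 0 < ψ θ j ∧ 0 < ψ θ j'), μ0 θ →
      exanteV μ0 v ψ < exanteV μ0 v ψ') := by
  classical
  choose! jstar hjpos hjmax hjone hjzero using hτ'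
  have hσ0 : ∀ θ : Θ, E.σ θ (∅ : Finset Θ) = 0 := by
    intro θ
    rcases (E.σ_nonneg θ ∅).lt_or_eq with h | h
    · exact absurd (E.σ_verif θ ∅ h) (by simp)
    · exact h.symm
  -- basic lemmas about W m := ∑ j, v j * τ m j
  have hW' : ∀ m : Finset Θ, m.Nonempty → (∑ j, v j * τ' m j) = v (jstar m) := by
    intro m hm
    rw [Finset.sum_eq_single (jstar m)
      (fun b _ hb => by rw [hjzero m hm b hb, mul_zero])
      (fun h => absurd (Finset.mem_univ _) h)]
    rw [hjone m hm, mul_one]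
  have hWle : ∀ m : Finset Θ, m.Nonempty →
      (∑ j, v j * E.τ m j) ≤ v (jstar m) := by
    intro m hm
    calc (∑ j, v j * E.τ m j) ≤ ∑ j, v (jstar m) * E.τ m j := by
          refine Finset.sum_le_sum fun i _ => ?_
          rcases (E.τ_nonneg m i).lt_or_eq with h | h
          · exact mul_le_mul_of_nonneg_right (hv.monotone (hjmax m hm i h)) h.le
          · rw [← h, mul_zero, mul_zero]
      _ = v (jstar m) := by rw [← Finset.mul_sum, E.τ_sum m hm, mul_one]
  have hWlt : ∀ m : Finset Θ, m.Nonempty → ∀ k, k ≠ jstar m → 0 < E.τ m k →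
      (∑ j, v j * E.τ m j) < v (jstar m) := by
    intro m hm k hk hτk
    have h1 : (∑ j, v j * E.τ m j) < ∑ j, v (jstar m) * E.τ m j := by
      refine Finset.sum_lt_sum (fun i _ => ?_) ⟨k, Finset.mem_univ k, ?_⟩
      · rcases (E.τ_nonneg m i).lt_or_eq with h | h
        · exact mul_le_mul_of_nonneg_right (hv.monotone (hjmax m hm i h)) h.le
        · rw [← h, mul_zero, mul_zero]
      · exact mul_lt_mul_of_pos_right (hv (lt_of_le_of_ne (hjmax m hm k hτk) hk)) hτk
    calc (∑ j, v j * E.τ m j) < ∑ j, v (jstar m) * E.τ m j := h1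
      _ = v (jstar m) := by rw [← Finset.mul_sum, E.τ_sum m hm, mul_one]
  have hswap : ∀ (t : Finset Θ → J → ℝ) (θ : Θ),
      (∑ j, v j * ∑ m, E.σ θ m * t m j) = ∑ m, E.σ θ m * ∑ j, v j * t m j := by
    intro t θ
    simp only [Finset.mul_sum]
    rw [Finset.sum_comm]
    exact Finset.sum_congr rfl fun m _ => Finset.sum_congr rfl fun j _ => by ring
  constructor
  · -- obedience
    intro j j'
    have hrw : (∑ θ, (u j θ - u j' θ) * ψ' θ j * μ0 θ)
        = ∑ m, τ' m j * ∑ θ, (u j θ - u j' θ) * μ0 θ * E.σ θ m := by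
      simp only [hψ', Finset.mul_sum, Finset.sum_mul]
      rw [Finset.sum_comm]
      exact Finset.sum_congr rfl fun m _ => Finset.sum_congr rfl fun θ _ => by ring
    rw [hrw]
    refine Finset.sum_nonneg fun m _ => ?_
    rcases m.eq_empty_or_nonempty with rfl | hm
    · simp [hσ0]
    by_cases hj : j = jstar m
    · subst hj
      rw [hjone m hm, one_mul]
      have hSnn : (0:ℝ) ≤ ∑ θ', μ0 θ' * E.σ θ' m :=
        Finset.sum_nonneg fun θ _ => mul_nonneg (hμ_pos θ).le (E.σ_nonneg θ m)
      rcases hSnn.lt_or_eq with hSpos | hSzero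
      · have hb := E.bayes m hSpos
        have hrw2 : (∑ θ, (u (jstar m) θ - u j' θ) * μ0 θ * E.σ θ m)
            = (∑ θ', μ0 θ' * E.σ θ' m) * ∑ θ, (u (jstar m) θ - u j' θ) * E.q m θ := by
          rw [Finset.mul_sum]
          refine Finset.sum_congr rfl fun θ _ => ?_
          rw [mul_assoc, ← hb θ]; ring
        rw [hrw2]
        have hrcv := E.receiver_opt m hm (jstar m) (hjpos m hm) j'
        have hd : (0:ℝ) ≤ ∑ θ, (u (jstar m) θ - u j' θ) * E.q m θ := by
          have hsplit : (∑ θ, (u (jstar m) θ - u j' θ) * E.q m θ)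
              = (∑ θ, u (jstar m) θ * E.q m θ) - ∑ θ, u j' θ * E.q m θ := by
            rw [← Finset.sum_sub_distrib]
            exact Finset.sum_congr rfl fun θ _ => by ring
          rw [hsplit]
          linarith
        exact mul_nonneg hSpos.le hd
      · have hall := (Finset.sum_eq_zero_iff_of_nonneg
          (fun θ _ => mul_nonneg (hμ_pos θ).le (E.σ_nonneg θ m))).mp hSzero.symm
        have hσz : ∀ θ, E.σ θ m = 0 := fun θ =>
          (mul_eq_zero.mp (hall θ (Finset.mem_univ θ))).resolve_left (hμ_pos θ).ne'
        simp [hσz]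
    · rw [hjzero m hm j hj, zero_mul]
  · -- strict improvement
    intro hT
    have hint : ∀ θ, (∑ j, v j * ψ θ j) = ∑ m, E.σ θ m * ∑ j, v j * E.τ m j := by
      intro θ
      simp only [hψ θ]
      exact hswap E.τ θ
    have hint' : ∀ θ, (∑ j, v j * ψ' θ j) = ∑ m, E.σ θ m * ∑ j, v j * τ' m j := by
      intro θ
      simp only [hψ' θ]
      exact hswap τ' θ
    have hle : ∀ θ, (∑ j, v j * ψ θ j) ≤ ∑ j, v j * ψ' θ j := by
      intro θ
      rw [hint θ, hint' θ]
      refine Finset.sum_le_sum fun m _ => ?_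
      rcases m.eq_empty_or_nonempty with rfl | hm
      · simp [hσ0]
      · rw [hW' m hm]
        exact mul_le_mul_of_nonneg_left (hWle m hm) (E.σ_nonneg θ m)
    -- obtain a state where ψ is non-degenerate
    have hTne : (Finset.univ.filter
        (fun θ => ∃ j j', j ≠ j' ∧ 0 < ψ θ j ∧ 0 < ψ θ j')).Nonempty := by
      by_contra h
      rw [Finset.not_nonempty_iff_eq_empty] at h
      rw [h, Finset.sum_empty] at hT
      exact lt_irrefl 0 hT
    obtain ⟨θ0, hθ0T⟩ := hTne
    obtain ⟨j, j', hjj', hj, hj'⟩ := (Finset.mem_filter.mp hθ0T).2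
    have hex : ∀ k : J, 0 < ψ θ0 k → ∃ m, 0 < E.σ θ0 m ∧ 0 < E.τ m k := by
      intro k hk
      rw [hψ θ0 k] at hk
      have hexm : ∃ m ∈ (Finset.univ : Finset (Finset Θ)),
          (0:ℝ) < E.σ θ0 m * E.τ m k := by
        by_contra h
        push_neg at h
        have : (∑ m, E.σ θ0 m * E.τ m k) ≤ 0 := Finset.sum_nonpos fun m hm => h m hm
        linarith
      obtain ⟨m, _, hm⟩ := hexm
      have h1 : 0 < E.σ θ0 m := by
        rcases (E.σ_nonneg θ0 m).lt_or_eq with h1 | h1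
        · exact h1
        · rw [← h1, zero_mul] at hm; exact absurd hm (lt_irrefl 0)
      have h2 : 0 < E.τ m k := by
        rcases (E.τ_nonneg m k).lt_or_eq with h2 | h2
        · exact h2
        · rw [← h2, mul_zero] at hm; exact absurd hm (lt_irrefl 0)
      exact ⟨m, h1, h2⟩
    obtain ⟨m1, hσ1, hτ1⟩ := hex j hj
    obtain ⟨m2, hσ2, hτ2⟩ := hex j' hj'
    have hm1 : m1.Nonempty := ⟨θ0, E.σ_verif θ0 m1 hσ1⟩
    have hm2 : m2.Nonempty := ⟨θ0, E.σ_verif θ0 m2 hσ2⟩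
    have hmix : ∃ m, 0 < E.σ θ0 m ∧ m.Nonempty ∧
        ∃ k, k ≠ jstar m ∧ 0 < E.τ m k := by
      by_cases hc1 : j = jstar m1
      · by_cases hc2 : j' = jstar m2
        · by_cases hd1 : ∃ k, k ≠ jstar m1 ∧ 0 < E.τ m1 k
          · exact ⟨m1, hσ1, hm1, hd1⟩
          by_cases hd2 : ∃ k, k ≠ jstar m2 ∧ 0 < E.τ m2 k
          · exact ⟨m2, hσ2, hm2, hd2⟩
          exfalso
          push_neg at hd1 hd2
          have hz1 : ∀ k, k ≠ jstar m1 → E.τ m1 k = 0 := fun k hk =>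
            le_antisymm (hd1 k hk) (E.τ_nonneg m1 k)
          have hz2 : ∀ k, k ≠ jstar m2 → E.τ m2 k = 0 := fun k hk =>
            le_antisymm (hd2 k hk) (E.τ_nonneg m2 k)
          have hτ1s : E.τ m1 (jstar m1) = 1 := by
            have hs := E.τ_sum m1 hm1
            rwa [Finset.sum_eq_single (jstar m1) (fun b _ hb => hz1 b hb)
              (fun h => absurd (Finset.mem_univ _) h)] at hs
          have hτ2s : E.τ m2 (jstar m2) = 1 := by
            have hs := E.τ_sum m2 hm2
            rwa [Finset.sum_eq_single (jstar m2) (fun b _ hb => hz2 b hb)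
              (fun h => absurd (Finset.mem_univ _) h)] at hs
          have hW1 : (∑ i, v i * E.τ m1 i) = v j := by
            rw [Finset.sum_eq_single (jstar m1)
              (fun b _ hb => by rw [hz1 b hb, mul_zero])
              (fun h => absurd (Finset.mem_univ _) h), hτ1s, mul_one, ← hc1]
          have hW2 : (∑ i, v i * E.τ m2 i) = v j' := by
            rw [Finset.sum_eq_single (jstar m2)
              (fun b _ hb => by rw [hz2 b hb, mul_zero])
              (fun h => absurd (Finset.mem_univ _) h), hτ2s, mul_one, ← hc2]
          have h12 := E.sender_opt θ0 m1 hσ1 m2 (E.σ_verif θ0 m2 hσ2)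
          have h21 := E.sender_opt θ0 m2 hσ2 m1 (E.σ_verif θ0 m1 hσ1)
          have : v j = v j' := by rw [← hW1, ← hW2]; linarith
          exact hjj' (hv.injective this)
        · exact ⟨m2, hσ2, hm2, j', hc2, hτ2⟩
      · exact ⟨m1, hσ1, hm1, j, hc1, hτ1⟩
    obtain ⟨m0, hσ0pos, hm0, k, hk, hτk⟩ := hmix
    have hstrict : (∑ j, v j * ψ θ0 j) < ∑ j, v j * ψ' θ0 j := by
      rw [hint θ0, hint' θ0]
      refine Finset.sum_lt_sum (fun m _ => ?_) ⟨m0, Finset.mem_univ m0, ?_⟩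
      · rcases m.eq_empty_or_nonempty with rfl | hm
        · simp [hσ0]
        · rw [hW' m hm]
          exact mul_le_mul_of_nonneg_left (hWle m hm) (E.σ_nonneg θ0 m)
      · rw [hW' m0 hm0]
        exact mul_lt_mul_of_pos_left (hWlt m0 hm0 k hk hτk) hσ0pos
    show exanteV μ0 v ψ < exanteV μ0 v ψ'
    unfold exanteV
    exact Finset.sum_lt_sum
      (fun θ _ => mul_le_mul_of_nonneg_right (hle θ) (hμ_pos θ).le)
      ⟨θ0, Finset.mem_univ θ0, mul_lt_mul_of_pos_right hstrict (hμ_pos θ0)⟩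
end
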